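/- arXiv:1009.3144 — 9 statements merged into one kernel-verified Lean document; each statement's English description precedes it below -/
import Mathlib

section
/- Let q ∈ ℝ[x] be a positive definite polynomial of degree two (i.e., q(t) > 0 for all t ∈ ℝ). Then for every positive semidefinite polynomial f ∈ ℝ[x] (i.e., f(t) ≥ 0 for all t ∈ ℝ), there exist polynomials ξ, η ∈ ℝ[x] such that f = η² + q·ξ². -/
/-!
The polynomials `η ^ 2 + q * ξ ^ 2` form a multiplicative monoid, and a nonnegative real
polynomial is a nonnegative constant times a product of nonnegative quadratics: a real root has
even multiplicity, and a non-real root `z` contributes the positive factor `(X - z) * (X - z̄)`.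
So it suffices to treat a nonnegative quadratic `p`. Along the pencil `p - s * q`, `s ≥ 0`, the
discriminant is `≤ 0` at `s = 0` and becomes `≥ 0` no later than an outer coefficient vanishes;
at a zero `s` of the discriminant found by the intermediate value theorem, `p - s * q = η ^ 2`
and `p = η ^ 2 + q * (√s) ^ 2`.
-/

open Polynomial

/-- Brahmagupta's identity: these are the norms of `η + ξ √-q`, hence closed under products. -/
def sqAddMulSq {R : Type*} [CommRing R] (q : R) : Submonoid R where
  carrier := {f | ∃ ξ η, f = η ^ 2 + q * ξ ^ 2}
  one_mem' := ⟨0, 1, by ring⟩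
  mul_mem' := by
    rintro _ _ ⟨ξ₁, η₁, rfl⟩ ⟨ξ₂, η₂, rfl⟩
    exact ⟨η₁ * ξ₂ + ξ₁ * η₂, η₁ * η₂ - q * ξ₁ * ξ₂, by ring⟩

section
variable {R : Type*} [CommRing R] {q f : R}

theorem mem_sqAddMulSq : f ∈ sqAddMulSq q ↔ ∃ ξ η, f = η ^ 2 + q * ξ ^ 2 := Iff.rfl

theorem sq_mem_sqAddMulSq (η : R) : η ^ 2 ∈ sqAddMulSq q := ⟨0, η, by ring⟩

end

namespace Polynomial

theorem coeff_nonneg_and_discrim_nonpos_of_nonneg {p : ℝ[X]} (hp : p.natDegree ≤ 2)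
    (hpsd : ∀ t, 0 ≤ p.eval t) :
    0 ≤ p.coeff 2 ∧ 0 ≤ p.coeff 0 ∧ discrim (p.coeff 2) (p.coeff 1) (p.coeff 0) ≤ 0 := by
  have heval (t : ℝ) : p.eval t = p.coeff 2 * (t * t) + p.coeff 1 * t + p.coeff 0 := by
    conv_lhs => rw [eq_quadratic_of_degree_le_two (natDegree_le_iff_degree_le.1 hp)]
    simp only [eval_add, eval_mul, eval_C, eval_pow, eval_X]; ring
  have hdisc := discrim_le_zero fun t => heval t ▸ hpsd t
  have h1 := heval 1 ▸ hpsd 1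
  have h2 := heval (-1) ▸ hpsd (-1)
  have h0 := heval 0 ▸ hpsd 0
  simp only [discrim] at hdisc
  norm_num at h0 h1 h2
  refine ⟨?_, h0, by simp only [discrim]; linarith⟩
  nlinarith

theorem exists_eq_sq_of_discrim_eq_zero {p : ℝ[X]} (hp : p.natDegree ≤ 2) (h2 : 0 ≤ p.coeff 2)
    (h0 : 0 ≤ p.coeff 0) (hd : discrim (p.coeff 2) (p.coeff 1) (p.coeff 0) = 0) :
    ∃ η : ℝ[X], p = η ^ 2 := by
  rw [eq_quadratic_of_degree_le_two (natDegree_le_iff_degree_le.1 hp)]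
  generalize p.coeff 2 = a, p.coeff 1 = b, p.coeff 0 = c at *
  obtain ⟨α, rfl⟩ : ∃ α, a = α ^ 2 := ⟨√a, (Real.sq_sqrt h2).symm⟩
  obtain ⟨γ, rfl, rfl⟩ : ∃ γ, c = γ ^ 2 ∧ b = 2 * α * γ := by
    have hb : b ^ 2 = (2 * α * √c) ^ 2 := by
      rw [discrim, sub_eq_zero] at hd
      rw [hd, mul_pow, Real.sq_sqrt h0]; ring
    rcases sq_eq_sq_iff_eq_or_eq_neg.1 hb with hb | hb
    · exact ⟨√c, (Real.sq_sqrt h0).symm, hb⟩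
    · exact ⟨-√c, by rw [neg_sq, Real.sq_sqrt h0], by rw [hb]; ring⟩
  exact ⟨C α * X + C γ, by simp only [map_mul, map_pow, map_ofNat]; ring⟩

theorem eval_nonneg_of_eval_mul_nonneg {d h : ℝ[X]} (hd0 : d ≠ 0) (hd : ∀ t, 0 ≤ d.eval t)
    (hdh : ∀ t, 0 ≤ (d * h).eval t) (t : ℝ) : 0 ≤ h.eval t := by
  have hsub : {s | d.IsRoot s}ᶜ ⊆ {s | 0 ≤ h.eval s} := fun s hs => by
    have := hdh s
    rw [eval_mul] at this
    exact nonneg_of_mul_nonneg_right this ((hd s).lt_of_ne' hs)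
  have hdense := ((finite_setOfPred_isRoot hd0).countable.dense_compl ℝ).mono hsub
  exact (isClosed_le continuous_const h.continuous).closure_subset
    (hdense.closure_eq ▸ Set.mem_univ t)

theorem mem_sqAddMulSq_of_natDegree_le_two {q p : ℝ[X]} (hq : q.natDegree ≤ 2)
    (hq0 : 0 < q.coeff 0) (hq2 : 0 < q.coeff 2) (hp : p.natDegree ≤ 2)
    (hpsd : ∀ t, 0 ≤ p.eval t) : p ∈ sqAddMulSq q := by
  obtain ⟨ha, hc, hdisc⟩ := coeff_nonneg_and_discrim_nonpos_of_nonneg hp hpsd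
  set r : ℝ → ℝ[X] := fun s => p - C s * q
  have hr (s : ℝ) (i : ℕ) : (r s).coeff i = p.coeff i - s * q.coeff i := by
    simp only [r, coeff_sub, coeff_C_mul]
  set D : ℝ → ℝ := fun s => discrim ((r s).coeff 2) ((r s).coeff 1) ((r s).coeff 0)
  have hD : Continuous D := by simp only [D, hr, discrim]; fun_prop
  set s₁ := min (p.coeff 2 / q.coeff 2) (p.coeff 0 / q.coeff 0)
  have hs₁ : 0 ≤ s₁ := le_min (div_nonneg ha hq2.le) (div_nonneg hc hq0.le)
  have hD₁ : 0 ≤ D s₁ := by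
    have : (r s₁).coeff 2 * (r s₁).coeff 0 = 0 := by
      rcases min_choice (p.coeff 2 / q.coeff 2) (p.coeff 0 / q.coeff 0) with h | h <;>
        simp only [hr, s₁, h, div_mul_cancel₀ _ hq2.ne', div_mul_cancel₀ _ hq0.ne', sub_self,
          zero_mul, mul_zero]
    simp only [D, discrim, mul_assoc, this]
    nlinarith
  obtain ⟨s, ⟨hs0, hs⟩, hDs⟩ := intermediate_value_Icc hs₁ hD.continuousOn
    ⟨by simpa [D, hr] using hdisc, hD₁⟩
  obtain ⟨η, hη⟩ := exists_eq_sq_of_discrim_eq_zero (p := r s)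
    ((natDegree_sub_le _ _).trans (max_le hp (natDegree_C_mul_le _ _ |>.trans hq)))
    (by rw [hr, sub_nonneg, ← le_div_iff₀ hq2]; exact hs.trans (min_le_left _ _))
    (by rw [hr, sub_nonneg, ← le_div_iff₀ hq0]; exact hs.trans (min_le_right _ _)) hDs
  refine ⟨C √s, η, ?_⟩
  rw [← hη, ← C_pow, Real.sq_sqrt hs0]
  ring

theorem sq_X_sub_C_dvd_of_nonneg {f : ℝ[X]} (hf : ∀ t, 0 ≤ f.eval t) {r : ℝ}
    (hr : f.IsRoot r) : (X - C r) ^ 2 ∣ f := by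
  rcases eq_or_ne f 0 with rfl | hf0
  · exact dvd_zero _
  have hmin : IsLocalMin (fun t => f.eval t) r :=
    Filter.Eventually.of_forall fun t => by simpa only [hr.eq_zero] using hf t
  have hder : f.derivative.IsRoot r := by
    rw [IsRoot.def, ← Polynomial.deriv]; exact hmin.deriv_eq_zero
  exact (pow_dvd_pow _ ((one_lt_rootMultiplicity_iff_isRoot hf0).2 ⟨hr, hder⟩)).trans
    (pow_rootMultiplicity_dvd f r)

theorem exists_nonneg_dvd_natDegree_eq_two {f : ℝ[X]} (hf : ∀ t, 0 ≤ f.eval t)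
    (hdeg : 0 < f.natDegree) : ∃ d : ℝ[X], d ∣ f ∧ d.natDegree = 2 ∧ ∀ t, 0 ≤ d.eval t := by
  obtain ⟨z, hz⟩ := IsAlgClosed.exists_aeval_eq_zero ℂ f (degree_pos_of_ne_zero_of_nonunit
    (ne_zero_of_natDegree_gt hdeg) (not_isUnit_of_natDegree_pos f hdeg)).ne'
  by_cases him : z.im = 0
  · have hr : f.IsRoot z.re := by
      rwa [← Complex.re_add_im z, him, Complex.ofReal_zero, zero_mul, add_zero,
        ← Complex.coe_algebraMap, aeval_algebraMap_apply, map_eq_zero,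
        coe_aeval_eq_eval] at hz
    refine ⟨(X - C z.re) ^ 2, sq_X_sub_C_dvd_of_nonneg hf hr, ?_, fun t => ?_⟩
    · rw [natDegree_pow, natDegree_X_sub_C]
    · rw [eval_pow]; positivity
  · refine ⟨_, f.quadratic_dvd_of_aeval_eq_zero_im_ne_zero hz him, by compute_degree!,
      fun t => ?_⟩
    have : ‖z‖ ^ 2 = z.re ^ 2 + z.im ^ 2 := by rw [Complex.sq_norm, Complex.normSq_apply]; ring
    simp only [eval_add, eval_sub, eval_mul, eval_pow, eval_X, eval_C, this]
    nlinarith [sq_nonneg (t - z.re), sq_nonneg z.im]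

theorem mem_sqAddMulSq_of_nonneg {q : ℝ[X]} (hq : q.natDegree ≤ 2) (hq0 : 0 < q.coeff 0)
    (hq2 : 0 < q.coeff 2) {f : ℝ[X]} (hf : ∀ t, 0 ≤ f.eval t) : f ∈ sqAddMulSq q := by
  induction hn : f.natDegree using Nat.strong_induction_on generalizing f with
  | _ n ih =>
  rcases Nat.eq_zero_or_pos n with rfl | hpos
  · have hc : 0 ≤ f.coeff 0 := coeff_zero_eq_eval_zero f ▸ hf 0
    rw [eq_C_of_natDegree_eq_zero hn, ← Real.sq_sqrt hc, C_pow]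
    exact sq_mem_sqAddMulSq _
  obtain ⟨d, ⟨h, rfl⟩, hd2, hd⟩ := exists_nonneg_dvd_natDegree_eq_two hf (hn ▸ hpos)
  have hd0 : d ≠ 0 := ne_zero_of_natDegree_gt (hd2 ▸ two_pos)
  have hh0 : h ≠ 0 := by rintro rfl; rw [mul_zero, natDegree_zero] at hn; omega
  rw [natDegree_mul hd0 hh0, hd2] at hn
  exact mul_mem (mem_sqAddMulSq_of_natDegree_le_two hq hq0 hq2 hd2.le hd)
    (ih _ (by omega) (eval_nonneg_of_eval_mul_nonneg hd0 hd hf) rfl)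

end Polynomial

theorem stmt_0 (q : Polynomial ℝ) (hq2 : q.degree = 2)
    (hqpos : ∀ t : ℝ, 0 < q.eval t)
    (f : Polynomial ℝ) (hf : ∀ t : ℝ, 0 ≤ f.eval t) :
    ∃ ξ η : Polynomial ℝ, f = η ^ 2 + q * ξ ^ 2 := by
  have hq : q.natDegree = 2 := natDegree_eq_of_degree_eq_some hq2
  have hlead_ne : q.coeff 2 ≠ 0 := by
    rw [← hq, coeff_natDegree, leadingCoeff_ne_zero]; rintro rfl; simp at hq2
  have hlead_nonneg : 0 ≤ q.coeff 2 :=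
    (coeff_nonneg_and_discrim_nonpos_of_nonneg hq.le fun t => (hqpos t).le).1
  exact mem_sqAddMulSq.1 <| mem_sqAddMulSq_of_nonneg hq.le
    (by simpa [coeff_zero_eq_eval_zero] using hqpos 0)
    (hlead_ne.symm.lt_of_le hlead_nonneg) hf
end

section
/- Let f ∈ ℝ[x] be a monic positive definite polynomial of degree 2, say f = (x+a)² + b² with b ≠ 0. Then there exists exactly one real number λ ≥ 0 such that f − λ(x²+1) is the square of a real polynomial. Explicitly, if a = 0 then λ = min{1, b²}; if a ≠ 0 then λ is the unique value with 0 ≤ λ < 1 satisfying (1−λ)(a²+b²−λ) − a² = 0. -/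
/-!
Writing the square root of a quadratic as `c X + d` and comparing coefficients, the real quadratic
`u X² + v X + w` is a square exactly when `u, w ≥ 0` and `v² = 4uw`. For `f - λ(X² + 1)` this reads
`λ ≤ 1`, `λ ≤ a² + b²` and `(1 - λ)(a² + b² - λ) = a²`: the quadratic equation in `λ` has the two roots
`(1 + a² + b² ∓ √((a² + b² - 1)² + 4a²)) / 2`, and only the smaller one lies below both `1` and `a² + b²`.
-/

open Polynomial

namespace Polynomial

theorem isSquare_quadratic_iff {R : Type*} [CommRing R] [IsDomain R] {u v w : R} :
    IsSquare (C u * X ^ 2 + C v * X + C w) ↔ IsSquare u ∧ IsSquare w ∧ v ^ 2 = 4 * u * w := by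
  constructor
  · rintro ⟨g, hg⟩
    have hdeg : g.natDegree ≤ 1 := by
      rcases eq_or_ne g 0 with rfl | hg0
      · simp
      have h2 : (C u * X ^ 2 + C v * X + C w).natDegree ≤ 2 := by compute_degree
      rw [hg, natDegree_mul hg0 hg0] at h2
      omega
    obtain ⟨c, d, rfl⟩ := exists_eq_X_add_C_of_natDegree_le_one hdeg
    have hexp : C u * X ^ 2 + C v * X + C w = C (c * c) * X ^ 2 + C (2 * c * d) * X + C (d * d) := by
      rw [hg]
      simp only [map_mul, map_ofNat]
      ring
    have hcoeff (n : ℕ) := congrArg (coeff · n) hexp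
    have hu : u = c * c := by simpa [coeff_X, coeff_C, -map_mul] using hcoeff 2
    have hv : v = 2 * c * d := by simpa [coeff_X, coeff_C, -map_mul] using hcoeff 1
    have hw : w = d * d := by simpa [coeff_X, coeff_C, -map_mul] using hcoeff 0
    exact ⟨⟨c, hu⟩, ⟨d, hw⟩, by rw [hu, hv, hw]; ring⟩
  · rintro ⟨⟨c, rfl⟩, ⟨d, rfl⟩, hv⟩
    have hv' : v ^ 2 = (2 * c * d) ^ 2 := by rw [hv]; ring
    obtain ⟨e, rfl, hd⟩ : ∃ e, v = 2 * c * e ∧ e * e = d * d := by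
      rcases sq_eq_sq_iff_eq_or_eq_neg.mp hv' with h | h
      · exact ⟨d, h, rfl⟩
      · exact ⟨-d, by rw [h]; ring, by ring⟩
    refine ⟨C c * X + C e, ?_⟩
    rw [← hd]
    simp only [map_mul, map_ofNat]
    ring

end Polynomial

theorem Real.isSquare_quadratic_iff {u v w : ℝ} :
    IsSquare (C u * X ^ 2 + C v * X + C w) ↔ 0 ≤ u ∧ 0 ≤ w ∧ v ^ 2 = 4 * u * w := by
  rw [Polynomial.isSquare_quadratic_iff, Real.isSquare_iff, Real.isSquare_iff]

theorem existsUnique_le_le_sub_mul_sub_eq (p q r : ℝ) (hr : 0 ≤ r) :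
    ∃! t : ℝ, t ≤ p ∧ t ≤ q ∧ (p - t) * (q - t) = r := by
  set s := √((p - q) ^ 2 + 4 * r)
  have hs : s ^ 2 = (p - q) ^ 2 + 4 * r := Real.sq_sqrt (by positivity)
  have hs_ge : |p - q| ≤ s := Real.abs_le_sqrt (by linarith)
  refine ⟨(p + q - s) / 2, ⟨?_, ?_, ?_⟩, ?_⟩
  · linarith [(abs_le.mp hs_ge).1]
  · linarith [(abs_le.mp hs_ge).2]
  · linear_combination hs / 4
  · rintro t ⟨htp, htq, ht⟩
    have hroots : (t - (p + q - s) / 2) * (t - (p + q + s) / 2) = 0 := by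
      linear_combination ht - hs / 4
    rcases mul_eq_zero.mp hroots with h | h
    · linarith
    · linarith [Real.sqrt_nonneg ((p - q) ^ 2 + 4 * r)]

theorem eq_min_of_le_of_le_of_sub_mul_sub_eq_zero {p q t : ℝ} (hp : t ≤ p) (hq : t ≤ q)
    (h : (p - t) * (q - t) = 0) : t = min p q := by
  rcases mul_eq_zero.mp h with h | h
  · rw [min_eq_left (by linarith)]; linarith
  · rw [min_eq_right (by linarith)]; linarith

theorem isSquare_sq_add_sub_mul_iff (a b lam : ℝ) :
    IsSquare ((X + C a) ^ 2 + C (b ^ 2) - C lam * (X ^ 2 + 1)) ↔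
      lam ≤ 1 ∧ lam ≤ a ^ 2 + b ^ 2 ∧ (1 - lam) * (a ^ 2 + b ^ 2 - lam) = a ^ 2 := by
  have hquad : (X + C a) ^ 2 + C (b ^ 2) - C lam * (X ^ 2 + 1)
      = C (1 - lam) * X ^ 2 + C (2 * a) * X + C (a ^ 2 + b ^ 2 - lam) := by
    simp only [map_sub, map_add, map_pow, map_mul, map_one, map_ofNat]
    ring
  rw [hquad, Real.isSquare_quadratic_iff, sub_nonneg, sub_nonneg]
  exact and_congr_right' <| and_congr_right' ⟨fun h => by linarith, fun h => by linarith⟩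

theorem stmt_2_general (a b : ℝ) :
    (∃! lam : ℝ, 0 ≤ lam ∧
      IsSquare ((X + C a) ^ 2 + C (b ^ 2) - C lam * (X ^ 2 + 1))) ∧
    (∀ lam : ℝ, 0 ≤ lam →
      IsSquare ((X + C a) ^ 2 + C (b ^ 2) - C lam * (X ^ 2 + 1)) →
      (a = 0 → lam = min 1 (b ^ 2)) ∧
      (a ≠ 0 → lam < 1 ∧ (1 - lam) * (a ^ 2 + b ^ 2 - lam) - a ^ 2 = 0)) := by
  simp only [isSquare_sq_add_sub_mul_iff]
  obtain ⟨lam, ⟨h1, h2, h3⟩, huniq⟩ :=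
    existsUnique_le_le_sub_mul_sub_eq 1 (a ^ 2 + b ^ 2) (a ^ 2) (sq_nonneg a)
  have hprod : 0 ≤ (1 + a ^ 2 + b ^ 2 - lam) * lam := by
    rw [show (1 + a ^ 2 + b ^ 2 - lam) * lam = b ^ 2 by linear_combination -h3]
    positivity
  refine ⟨⟨lam, ⟨?_, h1, h2, h3⟩, fun t ht => huniq t ht.2⟩, ?_⟩
  · exact nonneg_of_mul_nonneg_right hprod (by linarith [sq_nonneg a, sq_nonneg b])
  · rintro t - ⟨ht1, ht2, ht3⟩
    refine ⟨fun ha => ?_, fun ha => ⟨?_, by linarith⟩⟩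
    · subst ha
      exact eq_min_of_le_of_le_of_sub_mul_sub_eq_zero ht1 (by simpa using ht2) (by simpa using ht3)
    · refine lt_of_le_of_ne ht1 fun h => ha ?_
      rw [h] at ht3
      exact pow_eq_zero_iff two_ne_zero |>.mp (by linarith)

theorem stmt_2 (a b : ℝ) (hb : b ≠ 0) :
    (∃! lam : ℝ, 0 ≤ lam ∧
      IsSquare ((X + C a) ^ 2 + C (b ^ 2) - C lam * (X ^ 2 + 1))) ∧
    (∀ lam : ℝ, 0 ≤ lam →
      IsSquare ((X + C a) ^ 2 + C (b ^ 2) - C lam * (X ^ 2 + 1)) →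
      (a = 0 → lam = min 1 (b ^ 2)) ∧
      (a ≠ 0 → lam < 1 ∧ (1 - lam) * (a ^ 2 + b ^ 2 - lam) - a ^ 2 = 0)) :=
  stmt_2_general a b
end

section
/- Let q ∈ ℝ[x,y] be a positive definite binary quadratic form and let f ∈ ℝ[x,y] be a positive semidefinite binary form of degree 2d. Then there exist homogeneous forms ξ, η ∈ ℝ[x,y] with deg(ξ) = d−1, deg(η) = d, and f = η² + q·ξ². -/
/-!
Dehomogenize at `y = 1`. Polynomials of the form `H² + Q Ξ²` are norms from `ℝ[t][√-Q]`, so they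
are closed under multiplication. A nonnegative polynomial is a product of a nonnegative constant,
squares `(t - r)²` at its real roots and quadratics that are positive everywhere, so it suffices
that every nonnegative quadratic `P` is `L² + μ Q` with `μ ≥ 0`: the discriminant of `P - μ Q` is
`≤ 0` at `μ = 0` and `≥ 0` once an outer coefficient of `P - μ Q` vanishes, so by the intermediate
value theorem it vanishes at some `μ` in between, where `P - μ Q` is the square of a linear
polynomial. As `H²` and `Q Ξ²` have nonnegative leading coefficients, there is no cancellation of
top degrees, so `H` and `Ξ` have degree at most `d` and `d - 1` and homogenize to `η` and `ξ`.
-/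

def IsSqAddMulSq {R : Type*} [CommRing R] (q a : R) : Prop :=
  ∃ h ξ : R, a = h ^ 2 + q * ξ ^ 2

section CommRing

variable {R : Type*} [CommRing R] {q : R}

theorem isSqAddMulSq_sq (h : R) : IsSqAddMulSq q (h ^ 2) :=
  ⟨h, 0, by ring⟩

theorem IsSqAddMulSq.mul {a b : R} (ha : IsSqAddMulSq q a) (hb : IsSqAddMulSq q b) :
    IsSqAddMulSq q (a * b) := by
  obtain ⟨h₁, ξ₁, rfl⟩ := ha
  obtain ⟨h₂, ξ₂, rfl⟩ := hb
  -- Brahmagupta's identity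
  exact ⟨h₁ * h₂ - q * ξ₁ * ξ₂, h₁ * ξ₂ + ξ₁ * h₂, by ring⟩

end CommRing

theorem exists_eq_sq_of_discrim_eq_zero {a b c : ℝ} (ha : 0 ≤ a) (hc : 0 ≤ c)
    (h : discrim a b c = 0) : ∃ u v : ℝ, a = u ^ 2 ∧ b = 2 * u * v ∧ c = v ^ 2 := by
  have hb : b ^ 2 = (2 * √a * √c) ^ 2 := by
    rw [mul_pow, mul_pow, Real.sq_sqrt ha, Real.sq_sqrt hc]
    rw [discrim] at h
    linarith
  rcases sq_eq_sq_iff_eq_or_eq_neg.mp hb with hb | hb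
  · exact ⟨√a, √c, (Real.sq_sqrt ha).symm, hb, (Real.sq_sqrt hc).symm⟩
  · exact ⟨√a, -√c, (Real.sq_sqrt ha).symm, by rw [hb]; ring, by rw [neg_sq, Real.sq_sqrt hc]⟩

theorem exists_discrim_sub_mul_eq_zero {a b c α β γ : ℝ} (hα : 0 < α) (hγ : 0 < γ)
    (ha : 0 ≤ a) (hc : 0 ≤ c) (hdisc : discrim a b c ≤ 0) :
    ∃ μ : ℝ, 0 ≤ μ ∧ μ * α ≤ a ∧ μ * γ ≤ c ∧
      discrim (a - μ * α) (b - μ * β) (c - μ * γ) = 0 := by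
  set D : ℝ → ℝ := fun μ ↦ discrim (a - μ * α) (b - μ * β) (c - μ * γ)
  set μ₁ := min (a / α) (c / γ)
  have hμ₁ : 0 ≤ μ₁ := le_min (div_nonneg ha hα.le) (div_nonneg hc hγ.le)
  have hD₀ : D 0 ≤ 0 := by simpa [D] using hdisc
  -- at `μ₁` one of the outer coefficients vanishes, so the discriminant is a square
  have hD₁ : 0 ≤ D μ₁ := by
    have hvanish : (a - μ₁ * α) * (c - μ₁ * γ) = 0 := by
      rcases min_choice (a / α) (c / γ) with h | h <;> simp only [μ₁, h] <;> field_simp <;> ring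
    simp only [D, discrim]
    nlinarith [sq_nonneg (b - μ₁ * β)]
  have hcont : Continuous D := by simp only [D, discrim]; fun_prop
  obtain ⟨μ, ⟨hμ0, hμμ₁⟩, hμ⟩ := intermediate_value_Icc hμ₁ hcont.continuousOn ⟨hD₀, hD₁⟩
  refine ⟨μ, hμ0, ?_, ?_, hμ⟩
  · exact (le_div_iff₀ hα).1 (hμμ₁.trans (min_le_left _ _))
  · exact (le_div_iff₀ hγ).1 (hμμ₁.trans (min_le_right _ _))

section Polynomial

open Polynomial

theorem isSqAddMulSq_quadratic {a b c α β γ : ℝ} (hα : 0 < α) (hγ : 0 < γ)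
    (ha : 0 ≤ a) (hc : 0 ≤ c) (hdisc : discrim a b c ≤ 0) :
    IsSqAddMulSq (C α * X ^ 2 + C β * X + C γ) (C a * X ^ 2 + C b * X + C c) := by
  obtain ⟨μ, hμ, hμa, hμc, hD⟩ := exists_discrim_sub_mul_eq_zero (β := β) hα hγ ha hc hdisc
  obtain ⟨u, v, hu, hv, hw⟩ :=
    exists_eq_sq_of_discrim_eq_zero (sub_nonneg.2 hμa) (sub_nonneg.2 hμc) hD
  refine ⟨C u * X + C v, C √μ, ?_⟩
  rw [← C_pow, Real.sq_sqrt hμ, show a = u ^ 2 + μ * α by linarith,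
    show b = 2 * u * v + μ * β by linarith, show c = v ^ 2 + μ * γ by linarith]
  simp only [map_add, map_mul, map_pow, map_ofNat]
  ring

theorem sq_X_sub_C_dvd_of_isRoot_of_nonneg {F : ℝ[X]} {r : ℝ} (hF : ∀ t, 0 ≤ F.eval t)
    (hr : F.IsRoot r) : (X - C r) ^ 2 ∣ F := by
  rcases eq_or_ne F 0 with rfl | hF0
  · exact dvd_zero _
  have hmin : IsLocalMin (fun t ↦ F.eval t) r :=
    Filter.Eventually.of_forall fun t ↦ by simpa [hr.eq_zero] using hF t
  have hder : F.derivative.IsRoot r := by simpa [Polynomial.deriv] using hmin.deriv_eq_zero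
  rw [← le_rootMultiplicity_iff hF0]
  exact (one_lt_rootMultiplicity_iff_isRoot hF0).2 ⟨hr, hder⟩

theorem eval_nonneg_of_eval_mul_nonneg {P G : ℝ[X]} {r : ℝ} (hP : ∀ t ≠ r, 0 < P.eval t)
    (hPG : ∀ t, 0 ≤ (P * G).eval t) (t : ℝ) : 0 ≤ G.eval t := by
  have hne : {r}ᶜ ⊆ {t | 0 ≤ G.eval t} := fun s hs ↦
    (mul_nonneg_iff_of_pos_left (hP s hs)).1 (by simpa using hPG s)
  have hclosed : IsClosed {t | 0 ≤ G.eval t} := isClosed_le continuous_const G.continuous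
  exact hclosed.closure_subset_iff.2 hne (by rw [(dense_compl_singleton r).closure_eq]; trivial)

theorem eval_quadratic_pos_of_discrim_neg {a b c : ℝ} (ha : 0 < a) (h : discrim a b c < 0)
    (t : ℝ) : 0 < (C a * X ^ 2 + C b * X + C c).eval t := by
  simp only [eval_add, eval_mul, eval_pow, eval_X, eval_C]
  rw [discrim] at h
  nlinarith [sq_nonneg (2 * a * t + b)]

theorem exists_quadratic_dvd_of_forall_not_isRoot {F : ℝ[X]} (hF : 0 < F.natDegree)
    (hroot : ∀ t, ¬F.IsRoot t) :
    ∃ b c : ℝ, discrim 1 b c < 0 ∧ C 1 * X ^ 2 + C b * X + C c ∣ F := by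
  obtain ⟨z, hz⟩ := IsAlgClosed.exists_aeval_eq_zero ℂ F (natDegree_pos_iff_degree_pos.1 hF).ne'
  have him : z.im ≠ 0 := fun him ↦ hroot z.re <| by
    rw [← Complex.re_add_im z, him] at hz
    have h : ((F.eval z.re : ℝ) : ℂ) = 0 := (ofReal_eval F z.re).trans (by simpa using hz)
    exact_mod_cast h
  refine ⟨-(2 * z.re), ‖z‖ ^ 2, ?_, ?_⟩
  · rw [discrim, Complex.sq_norm, Complex.normSq_apply]
    nlinarith [sq_pos_of_ne_zero him]
  · simpa [sub_eq_add_neg] using F.quadratic_dvd_of_aeval_eq_zero_im_ne_zero hz him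

theorem isSqAddMulSq_of_forall_eval_nonneg {α β γ : ℝ} (hα : 0 < α) (hγ : 0 < γ) {F : ℝ[X]}
    (hF : ∀ t, 0 ≤ F.eval t) : IsSqAddMulSq (C α * X ^ 2 + C β * X + C γ) F := by
  induction hn : F.natDegree using Nat.strong_induction_on generalizing F with
  | _ n ih =>
  by_cases hroot : ∃ r, F.IsRoot r
  · obtain ⟨r, hr⟩ := hroot
    obtain ⟨G, rfl⟩ := sq_X_sub_C_dvd_of_isRoot_of_nonneg hF hr
    rcases eq_or_ne G 0 with rfl | hG
    · exact ⟨0, 0, by ring⟩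
    have hdeg : ((X - C r) ^ 2 * G).natDegree = 2 + G.natDegree := by
      rw [natDegree_mul (pow_ne_zero _ (X_sub_C_ne_zero r)) hG, natDegree_pow, natDegree_X_sub_C]
    have hpos : ∀ t ≠ r, 0 < ((X - C r) ^ 2).eval t := fun t ht ↦ by
      simpa using sq_pos_of_ne_zero (sub_ne_zero.2 ht)
    exact (isSqAddMulSq_sq _).mul
      (ih _ (by omega) (eval_nonneg_of_eval_mul_nonneg hpos hF) rfl)
  push Not at hroot
  rcases Nat.eq_zero_or_pos n with rfl | hn0
  · rw [eq_C_of_natDegree_eq_zero hn]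
    have hc : 0 ≤ F.coeff 0 := by simpa [coeff_zero_eq_eval_zero] using hF 0
    exact ⟨C √(F.coeff 0), 0, by rw [← C_pow, Real.sq_sqrt hc]; ring⟩
  obtain ⟨b, c, hdisc, G, rfl⟩ := exists_quadratic_dvd_of_forall_not_isRoot (hn ▸ hn0) hroot
  have hP := eval_quadratic_pos_of_discrim_neg one_pos hdisc
  have hc : 0 ≤ c := by rw [discrim] at hdisc; nlinarith [sq_nonneg b]
  have hG : G ≠ 0 := by rintro rfl; simp at hn; omega
  have hdeg : ((C 1 * X ^ 2 + C b * X + C c) * G).natDegree = 2 + G.natDegree := by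
    rw [natDegree_mul (fun h ↦ (hP 0).ne' (by rw [h, eval_zero])) hG,
      natDegree_quadratic one_ne_zero]
  have hGnonneg := eval_nonneg_of_eval_mul_nonneg (r := 0) (fun t _ ↦ hP t) hF
  exact (isSqAddMulSq_quadratic hα hγ zero_le_one hc hdisc.le).mul
    (ih G.natDegree (by omega) hGnonneg rfl)

theorem natDegree_le_natDegree_add_of_leadingCoeff_nonneg {R : Type*} [Semiring R]
    [LinearOrder R] [IsStrictOrderedRing R] {p q : R[X]} (hp : 0 ≤ p.leadingCoeff)
    (hq : 0 ≤ q.leadingCoeff) : p.natDegree ≤ (p + q).natDegree := by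
  rcases eq_or_ne p 0 with rfl | hp0
  · simp
  rcases eq_or_ne q 0 with rfl | hq0
  · simp
  have hlc : p.leadingCoeff + q.leadingCoeff ≠ 0 :=
    (add_pos_of_pos_of_nonneg (hp.lt_of_ne' (leadingCoeff_ne_zero.2 hp0)) hq).ne'
  exact natDegree_le_natDegree
    ((degree_add_eq_of_leadingCoeff_add_ne_zero hlc).symm ▸ le_max_left _ _)

theorem natDegree_le_natDegree_sq_add_mul_sq {Q H Ξ : ℝ[X]} (hQ : Q.natDegree = 2)
    (hQlc : 0 < Q.leadingCoeff) :
    2 * H.natDegree ≤ (H ^ 2 + Q * Ξ ^ 2).natDegree ∧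
      (Ξ ≠ 0 → 2 * Ξ.natDegree + 2 ≤ (H ^ 2 + Q * Ξ ^ 2).natDegree) := by
  have hH : 0 ≤ (H ^ 2).leadingCoeff := by rw [leadingCoeff_pow]; positivity
  have hQΞ : 0 ≤ (Q * Ξ ^ 2).leadingCoeff := by
    rw [leadingCoeff_mul, leadingCoeff_pow]; positivity
  refine ⟨?_, fun hΞ ↦ ?_⟩
  · simpa [natDegree_pow, mul_comm] using natDegree_le_natDegree_add_of_leadingCoeff_nonneg hH hQΞ
  · have h := natDegree_le_natDegree_add_of_leadingCoeff_nonneg hQΞ hH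
    rw [add_comm, natDegree_mul (leadingCoeff_ne_zero.1 hQlc.ne') (pow_ne_zero 2 hΞ),
      natDegree_pow, hQ] at h
    omega

theorem exists_sq_add_quadratic_mul_sq_of_nonneg {α β γ : ℝ} (hα : 0 < α) (hγ : 0 < γ)
    {F : ℝ[X]} {d : ℕ} (hF : ∀ t, 0 ≤ F.eval t) (hd : F.natDegree ≤ 2 * d) :
    ∃ H Ξ : ℝ[X], H.natDegree ≤ d ∧ (Ξ ≠ 0 → Ξ.natDegree + 1 ≤ d) ∧
      F = H ^ 2 + (C α * X ^ 2 + C β * X + C γ) * Ξ ^ 2 := by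
  obtain ⟨H, Ξ, rfl⟩ := isSqAddMulSq_of_forall_eval_nonneg (β := β) hα hγ hF
  obtain ⟨hH, hΞ⟩ := natDegree_le_natDegree_sq_add_mul_sq
    (Q := C α * X ^ 2 + C β * X + C γ) (H := H) (Ξ := Ξ)
    (natDegree_quadratic hα.ne') (by rwa [leadingCoeff_quadratic hα.ne'])
  exact ⟨H, Ξ, by omega, fun h ↦ by have := hΞ h; omega, rfl⟩

theorem eq_quadratic_of_natDegree_le_two {R : Type*} [Semiring R] {p : R[X]}
    (hp : p.natDegree ≤ 2) : p = C (p.coeff 2) * X ^ 2 + C (p.coeff 1) * X + C (p.coeff 0) := by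
  conv_lhs => rw [p.as_sum_range' 3 (by omega)]
  simp only [Finset.sum_range_succ, Finset.sum_range_zero, ← C_mul_X_pow_eq_monomial, zero_add,
    pow_zero, mul_one, pow_one]
  abel

variable {R : Type*} [CommSemiring R]

theorem natDegree_aeval_X_one_le {p : MvPolynomial (Fin 2) R} {n : ℕ}
    (hp : p.IsHomogeneous n) : (MvPolynomial.aeval ![(X : R[X]), 1] p).natDegree ≤ n := by
  rw [p.as_sum, map_sum]
  refine natDegree_sum_le_of_forall_le _ _ fun m hm ↦ ?_
  have hmn : m 0 + m 1 = n := by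
    simpa [Finsupp.weight_apply, Finsupp.sum_fintype, Fin.sum_univ_two]
      using hp (MvPolynomial.mem_support_iff.mp hm)
  simp only [MvPolynomial.aeval_monomial, algebraMap_eq, pow_zero, implies_true,
    Finsupp.prod_fintype, Fin.prod_univ_two, Matrix.cons_val_zero, Matrix.cons_val_one,
    Matrix.cons_val_fin_one, one_pow, mul_one]
  exact (natDegree_C_mul_X_pow_le _ _).trans (by omega)

theorem eval_one_zero_homogenize (p : R[X]) (n : ℕ) :
    MvPolynomial.eval ![1, 0] (p.homogenize n) = p.coeff n := by
  rw [homogenize, map_sum, Finset.sum_eq_single (n, 0)]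
  · simp [MvPolynomial.eval_monomial]
  · rintro ⟨k, l⟩ hkl hne
    have hl : l ≠ 0 := by rintro rfl; simp_all
    simp [MvPolynomial.eval_monomial, hl]
  · simp

theorem eval_vecCons_one_homogenize {p : R[X]} {n : ℕ} (hp : p.natDegree ≤ n) (t : R) :
    MvPolynomial.eval ![t, 1] (p.homogenize n) = p.eval t :=
  eval₂_homogenize_of_eq_one hp (RingHom.id R) ![t, 1] rfl

theorem eq_homogenize_sq_add_mul_homogenize_sq {q f : MvPolynomial (Fin 2) R} {d : ℕ}
    (hq : q.IsHomogeneous 2) (hf : f.IsHomogeneous (2 * d)) {H Ξ : R[X]} (hH : H.natDegree ≤ d)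
    (hΞ : Ξ ≠ 0 → Ξ.natDegree + 1 ≤ d)
    (hfHΞ : MvPolynomial.aeval ![X, 1] f = H ^ 2 + MvPolynomial.aeval ![X, 1] q * Ξ ^ 2) :
    f = H.homogenize d ^ 2 + q * Ξ.homogenize (d - 1) ^ 2 := by
  have hΞ' : Ξ.natDegree ≤ d - 1 := by
    rcases eq_or_ne Ξ 0 with rfl | hΞ0
    · simp
    · have := hΞ hΞ0; omega
  have hqξ : (q * Ξ.homogenize (d - 1) ^ 2).IsHomogeneous (2 * d) := by
    rcases eq_or_ne Ξ 0 with rfl | hΞ0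
    · simpa using MvPolynomial.isHomogeneous_zero _ _ _
    have h := hq.mul ((isHomogeneous_homogenize (n := d - 1) Ξ).pow 2)
    rwa [show 2 + (d - 1) * 2 = 2 * d by have := hΞ hΞ0; omega] at h
  have hη : (H.homogenize d ^ 2).IsHomogeneous (2 * d) := by
    simpa [mul_comm] using (isHomogeneous_homogenize H).pow 2
  rw [← homogenize_eq_of_isHomogeneous hf hfHΞ]
  refine homogenize_eq_of_isHomogeneous (hη.add hqξ) ?_
  simp only [map_add, map_mul, map_pow, aeval_homogenize_X_one _ hH, aeval_homogenize_X_one _ hΞ']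

end Polynomial

open MvPolynomial

theorem stmt_4 (d : ℕ) (q f : MvPolynomial (Fin 2) ℝ)
    (hq : q.IsHomogeneous 2) (hqpos : ∀ v : Fin 2 → ℝ, v ≠ 0 → 0 < eval v q)
    (hf : f.IsHomogeneous (2 * d)) (hfpsd : ∀ v : Fin 2 → ℝ, 0 ≤ eval v f) :
    ∃ ξ η : MvPolynomial (Fin 2) ℝ, ξ.IsHomogeneous (d - 1) ∧ η.IsHomogeneous d ∧
      f = η ^ 2 + q * ξ ^ 2 := by
  set Q := aeval ![(Polynomial.X : Polynomial ℝ), 1] q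
  set F := aeval ![(Polynomial.X : Polynomial ℝ), 1] f
  have hqQ : Q.homogenize 2 = q := Polynomial.homogenize_eq_of_isHomogeneous hq rfl
  have hQ2 : 0 < Q.coeff 2 := by
    rw [← eval_one_zero_homogenize, hqQ]
    exact hqpos _ (by simp)
  have hQ0 : 0 < Q.coeff 0 := by
    rw [Polynomial.coeff_zero_eq_eval_zero, ← eval_vecCons_one_homogenize
      (natDegree_aeval_X_one_le hq), hqQ]
    exact hqpos _ (by simp)
  have hF : ∀ t, 0 ≤ F.eval t := fun t ↦ by
    rw [← eval_vecCons_one_homogenize (natDegree_aeval_X_one_le hf),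
      Polynomial.homogenize_eq_of_isHomogeneous hf rfl]
    exact hfpsd _
  obtain ⟨H, Ξ, hH, hΞ, hFHΞ⟩ :=
    exists_sq_add_quadratic_mul_sq_of_nonneg hQ2 hQ0 hF (natDegree_aeval_X_one_le hf)
  rw [← eq_quadratic_of_natDegree_le_two (natDegree_aeval_X_one_le hq)] at hFHΞ
  exact ⟨_, _, Polynomial.isHomogeneous_homogenize _, Polynomial.isHomogeneous_homogenize _,
    eq_homogenize_sq_add_mul_homogenize_sq hq hf hH hΞ hFHΞ⟩
end

section
/- Let f(x,y,z) = f₂(x,y)z² + f₃(x,y)z + f₄(x,y), where fⱼ ∈ ℝ[x,y] is a binary form of degree j for j = 2,3,4. Then f is positive semidefinite on ℝ³ if and only if each of the three binary forms f₂, f₄, and 4f₂f₄ − f₃² is positive semidefinite on ℝ². -/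
open MvPolynomial

theorem quadratic_nonneg_iff {K : Type*} [Field K] [LinearOrder K] [IsStrictOrderedRing K]
    (a b c : K) :
    (∀ z : K, 0 ≤ a * z ^ 2 + b * z + c) ↔ 0 ≤ a ∧ 0 ≤ c ∧ 0 ≤ 4 * a * c - b ^ 2 := by
  constructor
  · intro H
    have hdiscr : b ^ 2 - 4 * a * c ≤ 0 := discrim_le_zero fun z => by simpa [sq] using H z
    have hc : 0 ≤ c := by simpa using H 0
    -- `4ac ≥ b² ≥ 0` forces `c = 0` and `b = 0` when `a < 0`, and then `z = 1` gives `a ≥ 0`.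
    have ha : 0 ≤ a := by
      by_contra! ha
      have hc0 : c = 0 := by nlinarith
      have hb0 : b = 0 := by nlinarith
      exact ha.not_ge (by simpa [hb0, hc0] using H 1)
    exact ⟨ha, hc, by linarith⟩
  · rintro ⟨ha, hc, hdiscr⟩ z
    rcases ha.eq_or_lt with rfl | ha
    · have hb : b = 0 := by nlinarith
      simpa [hb] using hc
    · have h4a : 0 ≤ 4 * a * (a * z ^ 2 + b * z + c) := by
        nlinarith [sq_nonneg (2 * a * z + b)]
      exact nonneg_of_mul_nonneg_right h4a (by positivity)

theorem stmt_5_general (f₂ f₃ f₄ : MvPolynomial (Fin 2) ℝ) :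
    (∀ x y z : ℝ,
        0 ≤ eval ![x, y] f₂ * z ^ 2 + eval ![x, y] f₃ * z + eval ![x, y] f₄) ↔
      ((∀ v : Fin 2 → ℝ, 0 ≤ eval v f₂) ∧ (∀ v : Fin 2 → ℝ, 0 ≤ eval v f₄) ∧
        (∀ v : Fin 2 → ℝ, 0 ≤ eval v (4 * f₂ * f₄ - f₃ ^ 2))) := by
  have eval_discr (v : Fin 2 → ℝ) :
      eval v (4 * f₂ * f₄ - f₃ ^ 2) = 4 * eval v f₂ * eval v f₄ - eval v f₃ ^ 2 := by
    simp
  simp_rw [eval_discr, ← forall_and, ← quadratic_nonneg_iff]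
  exact ⟨fun H v => FinVec.etaExpand_eq v ▸ H (v 0) (v 1), fun H x y => H ![x, y]⟩

theorem stmt_5 (f₂ f₃ f₄ : MvPolynomial (Fin 2) ℝ)
    (h2 : f₂.IsHomogeneous 2) (h3 : f₃.IsHomogeneous 3) (h4 : f₄.IsHomogeneous 4) :
    (∀ x y z : ℝ,
        0 ≤ eval ![x, y] f₂ * z ^ 2 + eval ![x, y] f₃ * z + eval ![x, y] f₄) ↔
      ((∀ v : Fin 2 → ℝ, 0 ≤ eval v f₂) ∧ (∀ v : Fin 2 → ℝ, 0 ≤ eval v f₄) ∧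
        (∀ v : Fin 2 → ℝ, 0 ≤ eval v (4 * f₂ * f₄ - f₃ ^ 2))) :=
  stmt_5_general f₂ f₃ f₄
end

section
/- Let f = f₂z² + f₃z + f₄ be a positive semidefinite ternary quartic with fⱼ ∈ ℝ[x,y] a binary form of degree j (j = 2,3,4). Suppose f₂ = l² is the square of a nonzero linear form l ∈ ℝ[x,y]. Then l divides f₃, and writing f₃ = 2l·g₂ with g₂ a quadratic form, the form f₄ − g₂² is positive semidefinite; consequently f = (lz + g₂)² + (f₄ − g₂²) is a sum of three squares of quadratic forms in ℝ[x,y,z]. -/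
/-!
On a line through a zero of `l`, `f` is the linear function `f₃ z + f₄` of `z`, which is bounded
below only if `f₃` vanishes there; so `f₃` vanishes on the line `l = 0`, hence `l ∣ f₃`.
Where `l ≠ 0`, completing the square `f = (l z + g₂)² + (f₄ - g₂²)` and taking `z = -g₂ / l`
gives `f₄ - g₂² ≥ 0`, and this extends to the line `l = 0` because `{l ≠ 0}` is dense.
-/

open MvPolynomial

namespace MvPolynomial

theorem IsHomogeneous.exists_eq_C_mul_X_add_C_mul_X {R : Type*} [CommSemiring R]
    {l : MvPolynomial (Fin 2) R} (hl : l.IsHomogeneous 1) :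
    ∃ a b : R, l = C a * X 0 + C b * X 1 := by
  rw [← mem_homogeneousSubmodule, homogeneousSubmodule_one_eq_span_X,
    Submodule.mem_span_range_iff_exists_fun] at hl
  obtain ⟨c, rfl⟩ := hl
  exact ⟨c 0, c 1, by simp [Fin.sum_univ_two, smul_eq_C_mul]⟩

theorem finSuccEquiv_rename_succ {R : Type*} [CommSemiring R] {n : ℕ}
    (q : MvPolynomial (Fin n) R) : finSuccEquiv R n (rename Fin.succ q) = Polynomial.C q := by
  induction q using MvPolynomial.induction_on with
  | C r => simp [finSuccEquiv_apply]
  | add p q hp hq => simp [hp, hq]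
  | mul_X p i hp => simp [hp, finSuccEquiv_X_succ]

section InfiniteField

variable {K : Type*} [Field K] [Infinite K]

theorem X_zero_sub_rename_succ_dvd {n : ℕ} (q : MvPolynomial (Fin n) K)
    {p : MvPolynomial (Fin (n + 1)) K}
    (hp : ∀ x : Fin (n + 1) → K, x 0 = eval (Fin.tail x) q → eval x p = 0) :
    X 0 - rename Fin.succ q ∣ p := by
  set e := finSuccEquiv K n
  have he : e (X 0 - rename Fin.succ q) = Polynomial.X - Polynomial.C q := by
    simp [e, finSuccEquiv_X_zero, finSuccEquiv_rename_succ]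
  rw [← map_dvd_iff e, he, Polynomial.dvd_iff_isRoot]
  refine MvPolynomial.funext fun t => ?_
  rw [map_zero, ← Polynomial.eval₂_hom, ← Polynomial.eval_map, ← eval_eq_eval_mv_eval']
  exact hp _ (by simp)

theorem C_mul_X_add_C_mul_X_dvd_of_left_ne_zero {a b : K} (ha : a ≠ 0)
    {p : MvPolynomial (Fin 2) K} (hp : ∀ x : Fin 2 → K, a * x 0 + b * x 1 = 0 → eval x p = 0) :
    C a * X 0 + C b * X 1 ∣ p := by
  have hl : C a * X 0 + C b * X 1 = C a * (X 0 - rename Fin.succ (C (-b / a) * X (0 : Fin 1))) := by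
    simp [mul_sub, ← mul_assoc, ← C_mul, mul_div_cancel₀ _ ha]
  rw [hl, (ha.isUnit.map C).mul_left_dvd]
  refine X_zero_sub_rename_succ_dvd _ fun x hx => hp x ?_
  simp only [map_mul, eval_C, eval_X, Fin.tail, Fin.succ_zero_eq_one] at hx
  rw [hx]
  field_simp
  ring

theorem C_mul_X_add_C_mul_X_dvd {a b : K} (hab : a ≠ 0 ∨ b ≠ 0) {p : MvPolynomial (Fin 2) K}
    (hp : ∀ x : Fin 2 → K, a * x 0 + b * x 1 = 0 → eval x p = 0) :
    C a * X 0 + C b * X 1 ∣ p := by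
  rcases hab with ha | hb
  · exact C_mul_X_add_C_mul_X_dvd_of_left_ne_zero ha hp
  · have hswap := map_dvd (rename (Equiv.swap 0 1))
      (C_mul_X_add_C_mul_X_dvd_of_left_ne_zero (b := a) (p := rename (Equiv.swap 0 1) p) hb
        fun x hx => by
          rw [eval_rename]
          exact hp _ (by simp; linear_combination hx))
    rw [rename_rename, ← Equiv.Perm.coe_mul, Equiv.swap_mul_self, Equiv.Perm.coe_one,
      rename_id_apply] at hswap
    simpa [add_comm] using hswap

end InfiniteField

end MvPolynomial

theorem LinearMap.dense_setOf_ne_zero {R M N : Type*} [Ring R] [TopologicalSpace R]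
    [Filter.NeBot (nhdsWithin (0 : R) {x | IsUnit x})] [TopologicalSpace M] [AddCommGroup M]
    [ContinuousAdd M] [Module R M] [ContinuousSMul R M] [AddCommGroup N] [Module R N]
    {φ : M →ₗ[R] N} (hφ : φ ≠ 0) : Dense {x | φ x ≠ 0} := by
  change Dense (LinearMap.ker φ : Set M)ᶜ
  rw [← interior_eq_empty_iff_dense_compl, ← Set.not_nonempty_iff_eq_empty]
  exact fun h => hφ (LinearMap.ker_eq_top.mp ((LinearMap.ker φ).eq_top_of_nonempty_interior' h))

section OrderedField

variable {𝕜 : Type*} [Field 𝕜] [LinearOrder 𝕜] [IsStrictOrderedRing 𝕜]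

theorem eq_zero_of_forall_nonneg_mul_add {c d : 𝕜} (h : ∀ z, 0 ≤ c * z + d) : c = 0 := by
  by_contra hc
  have := h (-(d + 1) / c)
  rw [mul_div_cancel₀ _ hc] at this
  linarith

theorem sq_le_of_forall_nonneg_quadratic {L G F : 𝕜} (hL : L ≠ 0)
    (h : ∀ z, 0 ≤ L ^ 2 * z ^ 2 + 2 * L * G * z + F) : G ^ 2 ≤ F := by
  have := h (-G / L)
  field_simp at this
  linarith

end OrderedField

theorem stmt_7_general (f₂ f₃ f₄ l : MvPolynomial (Fin 2) ℝ)
    (hl : l.IsHomogeneous 1) (hlne : l ≠ 0) (hf2 : f₂ = l ^ 2)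
    (hpsd : ∀ x y z : ℝ,
      0 ≤ eval ![x, y] f₂ * z ^ 2 + eval ![x, y] f₃ * z + eval ![x, y] f₄) :
    l ∣ f₃ ∧ ∀ g₂ : MvPolynomial (Fin 2) ℝ, f₃ = 2 * l * g₂ →
      (∀ v : Fin 2 → ℝ, 0 ≤ eval v (f₄ - g₂ ^ 2)) ∧
      (∀ x y z : ℝ,
        eval ![x, y] f₂ * z ^ 2 + eval ![x, y] f₃ * z + eval ![x, y] f₄ =
          (eval ![x, y] l * z + eval ![x, y] g₂) ^ 2 + eval ![x, y] (f₄ - g₂ ^ 2)) := by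
  obtain ⟨a, b, rfl⟩ := hl.exists_eq_C_mul_X_add_C_mul_X
  have hab : a ≠ 0 ∨ b ≠ 0 := by
    contrapose! hlne
    simp [hlne]
  have hf (v : Fin 2 → ℝ) (z : ℝ) :
      0 ≤ (a * v 0 + b * v 1) ^ 2 * z ^ 2 + eval v f₃ * z + eval v f₄ := by
    simpa [hf2, show ![v 0, v 1] = v by ext i; fin_cases i <;> rfl] using hpsd (v 0) (v 1) z
  refine ⟨C_mul_X_add_C_mul_X_dvd hab fun v hv =>
      eq_zero_of_forall_nonneg_mul_add fun z => by simpa [hv] using hf v z,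
    fun g₂ hg => ⟨?_, fun x y z => by simp [hf2, hg]; ring⟩⟩
  let φ : (Fin 2 → ℝ) →ₗ[ℝ] ℝ := a • LinearMap.proj 0 + b • LinearMap.proj 1
  have hφ : φ ≠ 0 := by
    intro h
    rcases hab with ha | hb
    · exact ha (by simpa [φ] using LinearMap.congr_fun h (Pi.single 0 1))
    · exact hb (by simpa [φ] using LinearMap.congr_fun h (Pi.single 1 1))
  refine (LinearMap.dense_setOf_ne_zero hφ).induction (fun v hv => ?_)
    (isClosed_le continuous_const (continuous_eval _))
  rw [map_sub, map_pow, sub_nonneg]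
  exact sq_le_of_forall_nonneg_quadratic hv fun z => by simpa [φ, hg] using hf v z

theorem stmt_7 (f₂ f₃ f₄ l : MvPolynomial (Fin 2) ℝ)
    (h2 : f₂.IsHomogeneous 2) (h3 : f₃.IsHomogeneous 3) (h4 : f₄.IsHomogeneous 4)
    (hl : l.IsHomogeneous 1) (hlne : l ≠ 0) (hf2 : f₂ = l ^ 2)
    (hpsd : ∀ x y z : ℝ,
      0 ≤ eval ![x, y] f₂ * z ^ 2 + eval ![x, y] f₃ * z + eval ![x, y] f₄) :
    l ∣ f₃ ∧ ∀ g₂ : MvPolynomial (Fin 2) ℝ, f₃ = 2 * l * g₂ →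
      (∀ v : Fin 2 → ℝ, 0 ≤ eval v (f₄ - g₂ ^ 2)) ∧
      (∀ x y z : ℝ,
        eval ![x, y] f₂ * z ^ 2 + eval ![x, y] f₃ * z + eval ![x, y] f₄ =
          (eval ![x, y] l * z + eval ![x, y] g₂) ^ 2 + eval ![x, y] (f₄ - g₂ ^ 2)) :=
  stmt_7_general f₂ f₃ f₄ l hl hlne hf2 hpsd
end

section
/- Let f ∈ ℝ[x,y,z] be a strictly positive definite quartic form. Then there exists an invertible linear change of coordinates bringing f into the form f = z⁴ + f₂(x,y)z² + f₃(x,y)z + f₄(x,y), where fⱼ is a binary form of degree j, such that the form f − z⁴ is positive semidefinite. -/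
open MvPolynomial
open scoped Matrix

/-!
Let `u` be a minimiser of `f` on the unit sphere and `m = f u > 0`; by homogeneity
`f x ≥ m ‖x‖⁴`. Composing `f` with `m^(-1/4)` times a reflection taking `e = Pi.single 2 1` to `u`
gives a form `g` with `g e = 1` and `g v ≥ ‖v‖⁴ ≥ (v 2)⁴`. Expanded in powers of `z = v 2`, the
`z⁴`-coefficient of `g` is a form of degree `0`, hence the constant `g e = 1`. So for fixed
`(v 0, v 1)` the quantity `g - z⁴` is a cubic polynomial in `z` that is nonnegative everywhere,
and its `z³`-coefficient vanishes.
-/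

theorem eq_zero_of_forall_cubic_nonneg {a b c d : ℝ}
    (h : ∀ s, 0 ≤ a + b * s + c * s ^ 2 + d * s ^ 3) : d = 0 := by
  by_contra hd
  set K := |a| + |b| + |c|
  -- a point with `|s| ≥ 1` where the cubic term outweighs the others
  set s := -(K + 1 + |d|) / d
  have hK : 0 ≤ K := by positivity
  have hds : d * s = -(K + 1 + |d|) := mul_div_cancel₀ _ hd
  have hs : 1 ≤ |s| := by
    rw [abs_div, abs_neg, le_div_iff₀ (abs_pos.2 hd),
      abs_of_pos (by positivity : 0 < K + 1 + |d|)]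
    linarith
  have hs_sq : |s| ≤ s ^ 2 := by nlinarith [sq_abs s]
  have ha : a ≤ |a| * s ^ 2 := by nlinarith [le_abs_self a, abs_nonneg a]
  have hb : b * s ≤ |b| * s ^ 2 := by
    calc b * s ≤ |b| * |s| := by rw [← abs_mul]; exact le_abs_self _
      _ ≤ |b| * s ^ 2 := by gcongr
  have hc : c * s ^ 2 ≤ |c| * s ^ 2 := by nlinarith [le_abs_self c]
  have hcubic : d * s ^ 3 = -(K + 1 + |d|) * s ^ 2 := by rw [← hds]; ring
  nlinarith [h s, abs_nonneg d]

theorem Matrix.exists_isUnit_det_mulVec_eq {σ : Type*} [Fintype σ] [DecidableEq σ] {K : Type*}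
    [Field K] (p : ENNReal) (L : WithLp p (σ → K) ≃ₗ[K] WithLp p (σ → K)) :
    ∃ A : Matrix σ σ K, IsUnit A.det ∧ ∀ v, A *ᵥ v = (L (WithLp.toLp p v)).ofLp := by
  set A := (Matrix.toLpLin p p).symm L.toLinearMap
  have hA : ∀ v, A *ᵥ v = (L (WithLp.toLp p v)).ofLp := fun v => by
    change (Matrix.toLpLin p p A (WithLp.toLp p v)).ofLp = _
    rw [LinearEquiv.apply_symm_apply, LinearEquiv.coe_coe]
  refine ⟨A, ?_, hA⟩
  rw [← Matrix.isUnit_iff_isUnit_det, ← Matrix.mulVec_injective_iff_isUnit]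
  intro v w hvw
  rw [hA, hA] at hvw
  simpa using L.injective (WithLp.ofLp_injective p hvw)

namespace MvPolynomial

section CommSemiring

variable {R σ τ : Type*} [CommSemiring R] {p : MvPolynomial σ R} {n : ℕ}

theorem IsHomogeneous.eval_smul (hp : p.IsHomogeneous n) (c : R) (v : σ → R) :
    eval (c • v) p = c ^ n * eval v p := by
  rw [eval_eq, eval_eq, Finset.mul_sum]
  refine Finset.sum_congr rfl fun d hd => ?_
  have hdeg : ∑ i ∈ d.support, d i = n := by
    simpa [Finsupp.weight_apply, Finsupp.sum] using hp (mem_support_iff.mp hd)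
  simp only [Pi.smul_apply, smul_eq_mul, mul_pow, Finset.prod_mul_distrib,
    Finset.prod_pow_eq_pow_sum, hdeg]
  ring

theorem IsHomogeneous.eval_eq_eval_zero (hp : p.IsHomogeneous 0) (v : σ → R) :
    eval v p = eval 0 p := by
  simpa using (hp.eval_smul 0 v).symm

theorem IsHomogeneous.exists_eval_eq_eval_mulVec [Fintype τ] (hp : p.IsHomogeneous n)
    (A : Matrix σ τ R) :
    ∃ q : MvPolynomial τ R, q.IsHomogeneous n ∧ ∀ v, eval v q = eval (A *ᵥ v) p := by
  refine ⟨bind₁ (fun k => ∑ i, C (A k i) * X i) p, ?_, fun v => ?_⟩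
  · have := hp.aeval (fun k => ∑ i, C (A k i) * X i) fun k =>
      IsHomogeneous.sum _ _ _ fun i _ => isHomogeneous_C_mul_X (A k i) i
    rwa [one_mul, aeval_eq_bind₁] at this
  · change MvPolynomial.aeval v (bind₁ _ p) = _
    simp only [aeval_bind₁, map_sum, map_mul, aeval_C, aeval_X]
    rfl

theorem IsHomogeneous.exists_eval_eq_sum_pow_last {k : ℕ} {p : MvPolynomial (Fin (k + 1)) R}
    (hp : p.IsHomogeneous n) :
    ∃ q : ℕ → MvPolynomial (Fin k) R, (∀ j ≤ n, (q j).IsHomogeneous (n - j)) ∧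
      ∀ v, eval v p = ∑ j ∈ Finset.range (n + 1), eval (Fin.init v) (q j) * v (Fin.last k) ^ j := by
  -- `finRotate` moves the last variable to the front, where `finSuccEquiv` splits it off
  set P := finSuccEquiv R k (rename (finRotate (k + 1)) p)
  refine ⟨P.coeff, fun j hj => (hp.rename_isHomogeneous).finSuccEquiv_coeff_isHomogeneous j _
    (by omega), fun v => ?_⟩
  have hdeg : P.natDegree < n + 1 := by
    have := (hp.rename_isHomogeneous (f := finRotate (k + 1))).totalDegree_le
    have := degreeOf_le_totalDegree (rename (finRotate (k + 1)) p) 0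
    rw [natDegree_finSuccEquiv]
    omega
  conv_lhs => rw [← Fin.snoc_init_self v, Fin.snoc_eq_cons_rotate]
  rw [← Function.comp_def, ← eval_rename, eval_eq_eval_mv_eval',
    Polynomial.eval_eq_sum_range' (Polynomial.natDegree_map_le.trans_lt hdeg)]
  simp only [Polynomial.coeff_map]

end CommSemiring

section Real

variable {σ : Type*} [Fintype σ] {p : MvPolynomial σ ℝ} {n : ℕ}

theorem IsHomogeneous.exists_norm_eq_one_eval_mul_norm_pow_le [Nonempty σ]
    (hp : p.IsHomogeneous n) :
    ∃ u : EuclideanSpace ℝ σ, ‖u‖ = 1 ∧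
      ∀ x : EuclideanSpace ℝ σ, eval u.ofLp p * ‖x‖ ^ n ≤ eval x.ofLp p := by
  obtain ⟨u, hu, hmin⟩ := (isCompact_sphere (0 : EuclideanSpace ℝ σ) 1).exists_isMinOn
    (NormedSpace.sphere_nonempty.2 zero_le_one)
    ((continuous_eval p).comp (PiLp.continuous_ofLp 2 _)).continuousOn
  refine ⟨u, by simpa using hu, fun x => ?_⟩
  rcases eq_or_ne x 0 with rfl | hx
  · simpa [mul_comm] using (hp.eval_smul 0 u.ofLp).ge
  · have hx₀ : 0 < ‖x‖ := norm_pos_iff.2 hx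
    have hy : ‖x‖⁻¹ • x ∈ Metric.sphere (0 : EuclideanSpace ℝ σ) 1 := by
      simp [norm_smul, hx₀.ne']
    calc eval u.ofLp p * ‖x‖ ^ n ≤ eval (‖x‖⁻¹ • x).ofLp p * ‖x‖ ^ n := by
          gcongr; exact hmin hy
      _ = eval x.ofLp p := by
          rw [WithLp.ofLp_smul, hp.eval_smul, inv_pow, mul_comm, ← mul_assoc,
            mul_inv_cancel₀ (by positivity), one_mul]

theorem IsHomogeneous.exists_isUnit_det_norm_pow_le_eval_mulVec [DecidableEq σ]
    (hp : p.IsHomogeneous n) (hn : n ≠ 0) (hpos : ∀ v : σ → ℝ, v ≠ 0 → 0 < eval v p) (i₀ : σ) :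
    ∃ A : Matrix σ σ ℝ, IsUnit A.det ∧ eval (A *ᵥ Pi.single i₀ 1) p = 1 ∧
      ∀ v, ‖WithLp.toLp 2 v‖ ^ n ≤ eval (A *ᵥ v) p := by
  have : Nonempty σ := ⟨i₀⟩
  obtain ⟨u, hu, hmin⟩ := hp.exists_norm_eq_one_eval_mul_norm_pow_le
  set m := eval u.ofLp p
  have hm : 0 < m := hpos _ fun h => by simp_all
  set e := EuclideanSpace.single i₀ (1 : ℝ)
  set ρ := (ℝ ∙ (e - u))ᗮ.reflection
  have hρ : ρ e = u := Submodule.reflection_sub (by simp [e, hu])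
  obtain ⟨B, hB, hBρ⟩ := Matrix.exists_isUnit_det_mulVec_eq 2 ρ.toLinearEquiv
  set c : ℝ := m⁻¹ ^ (n⁻¹ : ℝ)
  have hc : c ^ n * m = 1 := by
    rw [Real.rpow_inv_natCast_pow (inv_nonneg.2 hm.le) hn, inv_mul_cancel₀ hm.ne']
  have hc₀ : c ≠ 0 := (Real.rpow_pos_of_pos (inv_pos.2 hm) _).ne'
  refine ⟨c • B, ?_, ?_, fun v => ?_⟩
  · rw [Matrix.det_smul]
    exact (IsUnit.pow _ hc₀.isUnit).mul hB
  · rw [Matrix.smul_mulVec, hBρ, hp.eval_smul]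
    have : WithLp.toLp 2 (Pi.single i₀ 1) = e := rfl
    rw [LinearIsometryEquiv.coe_toLinearEquiv, this, hρ, hc]
  · rw [Matrix.smul_mulVec, hBρ, hp.eval_smul]
    calc ‖WithLp.toLp 2 v‖ ^ n = c ^ n * (m * ‖ρ (WithLp.toLp 2 v)‖ ^ n) := by
          rw [LinearIsometryEquiv.norm_map, ← mul_assoc, hc, one_mul]
      _ ≤ _ := by gcongr; exact hmin _

end Real

end MvPolynomial

theorem stmt_9 (f : MvPolynomial (Fin 3) ℝ) (hf : f.IsHomogeneous 4)
    (hpos : ∀ v : Fin 3 → ℝ, v ≠ 0 → 0 < eval v f) :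
    ∃ A : Matrix (Fin 3) (Fin 3) ℝ, IsUnit A.det ∧
      ∃ f₂ f₃ f₄ : MvPolynomial (Fin 2) ℝ,
        f₂.IsHomogeneous 2 ∧ f₃.IsHomogeneous 3 ∧ f₄.IsHomogeneous 4 ∧
        (∀ v : Fin 3 → ℝ, eval (A.mulVec v) f =
          (v 2) ^ 4 + eval ![v 0, v 1] f₂ * (v 2) ^ 2 +
            eval ![v 0, v 1] f₃ * (v 2) + eval ![v 0, v 1] f₄) ∧
        (∀ v : Fin 3 → ℝ, 0 ≤ eval (A.mulVec v) f - (v 2) ^ 4) := by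
  obtain ⟨A, hA, hA_single, hA_norm⟩ :=
    hf.exists_isUnit_det_norm_pow_le_eval_mulVec four_ne_zero hpos 2
  obtain ⟨g, hg, hgA⟩ := hf.exists_eval_eq_eval_mulVec A
  obtain ⟨q, hq, hgq⟩ := hg.exists_eval_eq_sum_pow_last
  have hexpand (v : Fin 3 → ℝ) :
      eval (A *ᵥ v) f = ∑ j ∈ Finset.range 5, eval (Fin.init v) (q j) * v 2 ^ j := by
    rw [← hgA, hgq]; rfl
  have hcoord (v : Fin 3 → ℝ) : v 2 ^ 4 ≤ eval (A *ᵥ v) f :=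
    calc v 2 ^ 4 = |v 2| ^ 4 := (Even.pow_abs (by decide) _).symm
      _ ≤ ‖WithLp.toLp 2 v‖ ^ 4 := by gcongr; exact PiLp.norm_apply_le (WithLp.toLp 2 v) 2
      _ ≤ _ := hA_norm v
  have hq₄ (y : Fin 2 → ℝ) : eval y (q 4) = 1 := by
    have hinit : Fin.init (Pi.single 2 1 : Fin 3 → ℝ) = 0 := by ext i; fin_cases i <;> rfl
    have hq_zero (j : ℕ) (hj : j < 4) : constantCoeff (q j) = 0 := by
      rw [constantCoeff_eq]
      exact (hq j hj.le).coeff_eq_zero (by simp; omega)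
    rw [(hq 4 le_rfl).eval_eq_eval_zero, ← hA_single, hexpand, hinit]
    simp [Finset.sum_range_succ, hq_zero]
  have hq₃ (y : Fin 2 → ℝ) : eval y (q 3) = 0 := by
    refine eq_zero_of_forall_cubic_nonneg (a := eval y (q 0)) (b := eval y (q 1))
      (c := eval y (q 2)) fun s => ?_
    have hlast : (Fin.snoc y s : Fin 3 → ℝ) 2 = s := Fin.snoc_last (α := fun _ => ℝ) _ _
    have h := hcoord (Fin.snoc y s)
    simp only [hexpand, Finset.sum_range_succ, Finset.sum_range_zero, Fin.init_snoc, hlast,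
      hq₄] at h
    linarith
  refine ⟨A, hA, q 2, q 1, q 0, hq 2 (by norm_num), hq 1 (by norm_num), hq 0 (by norm_num),
    fun v => ?_, fun v => sub_nonneg.2 (hcoord v)⟩
  have hinit : Fin.init v = ![v 0, v 1] := by ext i; fin_cases i <;> rfl
  simp only [hexpand, hinit, Finset.sum_range_succ, Finset.sum_range_zero, hq₃, hq₄]
  ring
end

section
/- Let f⁽¹⁾, f⁽²⁾, … be a sequence of quartic forms of the shape z⁴ + f₂z² + f₃z + f₄ (with fⱼ binary forms of degree j) converging coefficient-wise to a form f of the same shape. If every f⁽ʲ⁾ is a sum of three squares of quadratic forms, then f is a sum of three squares of quadratic forms. -/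
/-!
Pointwise limits of sums of squares of forms of a fixed degree are again such sums. The squared
forms are bounded pointwise by the convergent sums, and as functions they lie in a
finite-dimensional subspace of `(σ → ℝ) → ℝ`, which is closed and carries its Euclidean topology;
so a subsequence converges to forms whose squares sum to the limit.
-/

open MvPolynomial Filter Topology

theorem Submodule.exists_subseq_tendsto_of_isCompact {𝕜 E : Type*} [NontriviallyNormedField 𝕜]
    [CompleteSpace 𝕜] [AddCommGroup E] [Module 𝕜 E] [TopologicalSpace E]
    [IsTopologicalAddGroup E] [ContinuousSMul 𝕜 E] [T2Space E]
    (W : Submodule 𝕜 E) [FiniteDimensional 𝕜 W] {K : Set E} (hK : IsCompact K) {u : ℕ → E}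
    (huW : ∀ n, u n ∈ W) (huK : ∀ n, u n ∈ K) :
    ∃ w ∈ W, ∃ φ : ℕ → ℕ, StrictMono φ ∧ Tendsto (u ∘ φ) atTop (𝓝 w) := by
  have : FirstCountableTopology W :=
    (Module.finBasis 𝕜 W).equivFun.toContinuousLinearEquiv.toHomeomorph.isEmbedding
      |>.firstCountableTopology
  have hK' : IsCompact (((↑) : W → E) ⁻¹' K) :=
    Topology.IsInducing.subtypeVal.isCompact_preimage
      (by simpa using W.closed_of_finiteDimensional) hK
  obtain ⟨w, -, φ, hφ, hlim⟩ := hK'.tendsto_subseq (x := fun n => ⟨u n, huW n⟩) huK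
  exact ⟨w, w.2, φ, hφ, (continuous_subtype_val.tendsto w).comp hlim⟩

namespace MvPolynomial

variable {σ ι R : Type*} {d : ℕ}

instance [Finite σ] [CommSemiring R] : Module.Finite R (homogeneousSubmodule σ R d) :=
  Module.Finite.iff_fg.mpr (homogeneousSubmodule_fg σ R d)

theorem IsHomogeneous.eval_eq_sum [Finite σ] [CommSemiring R] {p : MvPolynomial σ R}
    (hp : p.IsHomogeneous d) (v : σ → R) :
    eval v p = ∑ m ∈ (Finsupp.finite_of_degree_eq d).toFinset,
      coeff m p * ∏ i ∈ m.support, v i ^ m i := by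
  rw [eval_eq]
  refine Finset.sum_subset (fun m hm => ?_) (fun m _ hm => by simp [notMem_support_iff.mp hm])
  simpa [Finsupp.degree_apply] using (degree_eq_sum_deg_support hp hm).symm

theorem tendsto_eval_of_tendsto_coeff [Finite σ] [CommSemiring R] [TopologicalSpace R]
    [IsTopologicalSemiring R] {P : ℕ → MvPolynomial σ R} {p : MvPolynomial σ R}
    (hP : ∀ n, (P n).IsHomogeneous d) (hp : p.IsHomogeneous d)
    (h : ∀ m, Tendsto (fun n => coeff m (P n)) atTop (𝓝 (coeff m p))) (v : σ → R) :
    Tendsto (fun n => eval v (P n)) atTop (𝓝 (eval v p)) := by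
  simp only [(hP _).eval_eq_sum, hp.eval_eq_sum]
  exact tendsto_finsetSum _ fun m _ => (h m).mul_const _

variable (σ ι d)

def IsSumOfSqForms [Fintype ι] (g : (σ → ℝ) → ℝ) : Prop :=
  ∃ p : ι → MvPolynomial σ ℝ, (∀ i, (p i).IsHomogeneous d) ∧ ∀ v, g v = ∑ i, eval v (p i) ^ 2

noncomputable def formTupleEvalₗ : (ι → homogeneousSubmodule σ ℝ d) →ₗ[ℝ] ι → (σ → ℝ) → ℝ :=
  LinearMap.pi fun i => evalₗ ℝ σ ∘ₗ (homogeneousSubmodule σ ℝ d).subtype ∘ₗ LinearMap.proj i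

variable {σ ι d}

theorem isSeqClosed_setOf_isSumOfSqForms [Finite σ] [Fintype ι] :
    IsSeqClosed {g | IsSumOfSqForms σ ι d g} := by
  intro G g hG hlim
  choose P hPdeg hPeq using hG
  have hbdd : ∀ v, BddAbove (Set.range fun n => G n v) := fun v =>
    (tendsto_pi_nhds.1 hlim v).bddAbove_range
  choose B hB using hbdd
  set u : ℕ → ι → (σ → ℝ) → ℝ := fun n => formTupleEvalₗ σ ι d fun i => ⟨P n i, hPdeg n i⟩
  have hbox : ∀ n, u n ∈ Set.univ.pi fun _ => Set.univ.pi fun v => Set.Icc (-√(B v)) √(B v) := by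
    intro n i _ v _
    refine abs_le.1 (Real.abs_le_sqrt ?_)
    calc u n i v ^ 2 ≤ ∑ j, eval v (P n j) ^ 2 :=
          Finset.single_le_sum (f := fun j => eval v (P n j) ^ 2) (fun _ _ => sq_nonneg _)
            (Finset.mem_univ i)
      _ = G n v := (hPeq n v).symm
      _ ≤ B v := hB v (Set.mem_range_self n)
  obtain ⟨w, ⟨q, rfl⟩, φ, hφ, hconv⟩ :=
    (LinearMap.range (formTupleEvalₗ σ ι d)).exists_subseq_tendsto_of_isCompact
      (isCompact_univ_pi fun _ => isCompact_univ_pi fun _ => isCompact_Icc) (fun n => ⟨_, rfl⟩) hbox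
  refine ⟨fun i => q i, fun i => (q i).2, fun v => tendsto_nhds_unique
    ((tendsto_pi_nhds.1 hlim v).comp hφ.tendsto_atTop) ?_⟩
  simp only [Function.comp_def, hPeq]
  exact tendsto_finsetSum _ fun i _ => (tendsto_pi_nhds.1 (tendsto_pi_nhds.1 hconv i) v).pow 2

end MvPolynomial

noncomputable def monicQuartic (f₂ f₃ f₄ : MvPolynomial (Fin 2) ℝ) (v : Fin 3 → ℝ) : ℝ :=
  v 2 ^ 4 + eval ![v 0, v 1] f₂ * v 2 ^ 2 + eval ![v 0, v 1] f₃ * v 2 + eval ![v 0, v 1] f₄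

theorem isSumOfSqForms_monicQuartic_iff {f₂ f₃ f₄ : MvPolynomial (Fin 2) ℝ} :
    IsSumOfSqForms (Fin 3) (Fin 3) 2 (monicQuartic f₂ f₃ f₄) ↔
      ∃ p₁ p₂ p₃ : MvPolynomial (Fin 3) ℝ,
        p₁.IsHomogeneous 2 ∧ p₂.IsHomogeneous 2 ∧ p₃.IsHomogeneous 2 ∧
        ∀ x y z : ℝ,
          z ^ 4 + eval ![x, y] f₂ * z ^ 2 + eval ![x, y] f₃ * z + eval ![x, y] f₄ =
            eval ![x, y, z] p₁ ^ 2 + eval ![x, y, z] p₂ ^ 2 + eval ![x, y, z] p₃ ^ 2 := by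
  constructor
  · rintro ⟨p, hp, h⟩
    exact ⟨p 0, p 1, p 2, hp 0, hp 1, hp 2, fun x y z => by
      simpa [monicQuartic, Fin.sum_univ_three] using h ![x, y, z]⟩
  · rintro ⟨p₁, p₂, p₃, h₁, h₂, h₃, h⟩
    refine ⟨![p₁, p₂, p₃], fun i => by fin_cases i <;> assumption, fun v => ?_⟩
    have hv : ![v 0, v 1, v 2] = v := by ext i; fin_cases i <;> rfl
    simpa [monicQuartic, Fin.sum_univ_three, hv] using h (v 0) (v 1) (v 2)

theorem tendsto_monicQuartic {F₂ F₃ F₄ : ℕ → MvPolynomial (Fin 2) ℝ}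
    {f₂ f₃ f₄ : MvPolynomial (Fin 2) ℝ}
    (hF₂ : ∀ n, (F₂ n).IsHomogeneous 2) (hF₃ : ∀ n, (F₃ n).IsHomogeneous 3)
    (hF₄ : ∀ n, (F₄ n).IsHomogeneous 4)
    (h₂ : f₂.IsHomogeneous 2) (h₃ : f₃.IsHomogeneous 3) (h₄ : f₄.IsHomogeneous 4)
    (hc₂ : ∀ m, Tendsto (fun n => coeff m (F₂ n)) atTop (𝓝 (coeff m f₂)))
    (hc₃ : ∀ m, Tendsto (fun n => coeff m (F₃ n)) atTop (𝓝 (coeff m f₃)))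
    (hc₄ : ∀ m, Tendsto (fun n => coeff m (F₄ n)) atTop (𝓝 (coeff m f₄))) :
    Tendsto (fun n => monicQuartic (F₂ n) (F₃ n) (F₄ n)) atTop (𝓝 (monicQuartic f₂ f₃ f₄)) :=
  tendsto_pi_nhds.2 fun _ =>
    ((tendsto_const_nhds.add
      ((tendsto_eval_of_tendsto_coeff hF₂ h₂ hc₂ _).mul_const _)).add
      ((tendsto_eval_of_tendsto_coeff hF₃ h₃ hc₃ _).mul_const _)).add
      (tendsto_eval_of_tendsto_coeff hF₄ h₄ hc₄ _)

theorem stmt_11 (F₂ F₃ F₄ : ℕ → MvPolynomial (Fin 2) ℝ)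
    (f₂ f₃ f₄ : MvPolynomial (Fin 2) ℝ)
    (hdeg : ∀ n, (F₂ n).IsHomogeneous 2 ∧ (F₃ n).IsHomogeneous 3 ∧ (F₄ n).IsHomogeneous 4)
    (h2 : f₂.IsHomogeneous 2) (h3 : f₃.IsHomogeneous 3) (h4 : f₄.IsHomogeneous 4)
    (hconv : ∀ m : Fin 2 →₀ ℕ,
      Tendsto (fun n => coeff m (F₂ n)) atTop (nhds (coeff m f₂)) ∧
      Tendsto (fun n => coeff m (F₃ n)) atTop (nhds (coeff m f₃)) ∧
      Tendsto (fun n => coeff m (F₄ n)) atTop (nhds (coeff m f₄)))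
    (hsos : ∀ n, ∃ p₁ p₂ p₃ : MvPolynomial (Fin 3) ℝ,
      p₁.IsHomogeneous 2 ∧ p₂.IsHomogeneous 2 ∧ p₃.IsHomogeneous 2 ∧
      ∀ x y z : ℝ,
        z ^ 4 + eval ![x, y] (F₂ n) * z ^ 2 + eval ![x, y] (F₃ n) * z +
            eval ![x, y] (F₄ n) =
          eval ![x, y, z] p₁ ^ 2 + eval ![x, y, z] p₂ ^ 2 + eval ![x, y, z] p₃ ^ 2) :
    ∃ p₁ p₂ p₃ : MvPolynomial (Fin 3) ℝ,
      p₁.IsHomogeneous 2 ∧ p₂.IsHomogeneous 2 ∧ p₃.IsHomogeneous 2 ∧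
      ∀ x y z : ℝ,
        z ^ 4 + eval ![x, y] f₂ * z ^ 2 + eval ![x, y] f₃ * z + eval ![x, y] f₄ =
          eval ![x, y, z] p₁ ^ 2 + eval ![x, y, z] p₂ ^ 2 + eval ![x, y, z] p₃ ^ 2 :=
  isSumOfSqForms_monicQuartic_iff.1 <|
    isSeqClosed_setOf_isSumOfSqForms (fun n => isSumOfSqForms_monicQuartic_iff.2 (hsos n)) <|
      tendsto_monicQuartic (fun n => (hdeg n).1) (fun n => (hdeg n).2.1) (fun n => (hdeg n).2.2)
        h2 h3 h4 (fun m => (hconv m).1) (fun m => (hconv m).2.1) (fun m => (hconv m).2.2)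
end

section
/- Let f(z) = a₀z⁴ + a₂z² + a₃z + a₄ ∈ ℝ[z] with a₀ > 0 be strictly positive (f(t) > 0 for all t ∈ ℝ). Then f has a multiple complex root if and only if a₃ = 0 and a₂² − 4a₀a₄ = 0, i.e., if and only if f = a₀(z² + a₂/(2a₀))². -/
/-!
A multiple root `w` of the positive quartic `f` cannot be real, so its conjugate is a multiple
root as well; hence `(X² - 2 Re w X + |w|²)²` divides `f` over `ℝ`, and by degrees
`f = a₀ (X² - 2 Re w X + |w|²)²`. The `X³`-coefficient of `f` vanishes, which forces `Re w = 0`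
and gives the factorization; comparing the remaining coefficients turns it into `a₃ = 0` and
`a₂² = 4 a₀ a₄`. Conversely, any complex root of `X² + a₂/(2a₀)` is a double root of
`a₀ (X² + a₂/(2a₀))²`.
-/

open Polynomial Complex ComplexConjugate

lemma Complex.im_ne_zero_of_aeval_eq_zero {p : ℝ[X]} (hp : ∀ t : ℝ, p.eval t ≠ 0) {z : ℂ}
    (hz : aeval z p = 0) : z.im ≠ 0 := by
  intro him
  rw [← re_add_im z, him, ofReal_zero, zero_mul, add_zero, ← coe_algebraMap,
    aeval_algebraMap_apply_eq_algebraMap_eval] at hz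
  exact hp z.re ((algebraMap ℝ ℂ).injective (hz.trans (map_zero _).symm))

lemma Polynomial.map_quadratic_eq_mul_conj (z : ℂ) :
    (X ^ 2 - C (2 * z.re) * X + C (‖z‖ ^ 2) : ℝ[X]).map (algebraMap ℝ ℂ) =
      (X - C (conj z)) * (X - C z) := by
  calc
    map (algebraMap ℝ ℂ) (X ^ 2 - C (2 * z.re) * X + C (‖z‖ ^ 2))
    _ = X ^ 2 - C (↑(2 * z.re) : ℂ) * X + C (‖z‖ ^ 2 : ℂ) := by simp
    _ = (X - C (conj z)) * (X - C z) := by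
      rw [← add_conj, map_add, ← mul_conj', map_mul]
      ring

lemma Polynomial.quadratic_sq_dvd_of_two_le_rootMultiplicity (p : ℝ[X]) {z : ℂ} (hz : z.im ≠ 0)
    (h : 2 ≤ (p.map (algebraMap ℝ ℂ)).rootMultiplicity z) :
    (X ^ 2 - C (2 * z.re) * X + C (‖z‖ ^ 2)) ^ 2 ∣ p := by
  rcases eq_or_ne p 0 with rfl | hp
  · exact dvd_zero _
  set P := p.map (algebraMap ℝ ℂ)
  have hP : P ≠ 0 := map_ne_zero hp
  have hconj : P.map (starRingEnd ℂ) = P := by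
    rw [map_map, show (starRingEnd ℂ).comp (algebraMap ℝ ℂ) = algebraMap ℝ ℂ from
      RingHom.ext conj_ofReal]
  have h' : 2 ≤ P.rootMultiplicity (conj z) := by
    have := le_rootMultiplicity_map (by rwa [hconj] : P.map (starRingEnd ℂ) ≠ 0) z
    rw [hconj] at this
    exact h.trans this
  rw [← map_dvd_map' (algebraMap ℝ ℂ), Polynomial.map_pow, map_quadratic_eq_mul_conj, mul_pow]
  refine IsCoprime.mul_dvd (IsCoprime.pow ?_) ((le_rootMultiplicity_iff hP).mp h')
    ((le_rootMultiplicity_iff hP).mp h)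
  exact isCoprime_X_sub_C_of_isUnit_sub <| .mk0 _ <| sub_ne_zero.2 <| mt conj_eq_iff_im.1 hz

lemma Polynomial.exists_two_le_rootMultiplicity_of_sq_dvd {K L : Type*} [Field K] [Field L]
    [IsAlgClosed L] [Algebra K L] {p q : K[X]} (hp : p ≠ 0) (hq : 0 < q.degree) (h : q ^ 2 ∣ p) :
    ∃ z : L, 2 ≤ (p.map (algebraMap K L)).rootMultiplicity z := by
  obtain ⟨z, hz⟩ := IsAlgClosed.exists_aeval_eq_zero L q hq.ne'
  have hzq : X - C z ∣ q.map (algebraMap K L) := by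
    rwa [dvd_iff_isRoot, IsRoot, eval_map_algebraMap]
  refine ⟨z, (le_rootMultiplicity_iff (map_ne_zero hp)).mpr ?_⟩
  exact (pow_dvd_pow_of_dvd hzq 2).trans (by simpa using Polynomial.map_dvd (algebraMap K L) h)

lemma Polynomial.eq_C_leadingCoeff_mul_quadratic_sq {p : ℝ[X]} (hdeg : p.natDegree ≤ 4)
    (hp : ∀ t : ℝ, p.eval t ≠ 0) {z : ℂ}
    (hz : 2 ≤ (p.map (algebraMap ℝ ℂ)).rootMultiplicity z) :
    p = C p.leadingCoeff * (X ^ 2 - C (2 * z.re) * X + C (‖z‖ ^ 2)) ^ 2 := by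
  have hp0 : p ≠ 0 := fun h => hp 0 (by simp [h])
  have hroot : aeval z p = 0 := by
    rw [aeval_def, ← eval_map]
    exact (rootMultiplicity_pos (map_ne_zero hp0)).mp (by omega)
  have hq : (X ^ 2 - C (2 * z.re) * X + C (‖z‖ ^ 2) : ℝ[X]).Monic := by monicity!
  refine eq_leadingCoeff_mul_of_monic_of_dvd_of_natDegree_le (hq.pow 2)
    (quadratic_sq_dvd_of_two_le_rootMultiplicity p (im_ne_zero_of_aeval_eq_zero hp hroot) hz) ?_
  have hq2 : (X ^ 2 - C (2 * z.re) * X + C (‖z‖ ^ 2) : ℝ[X]).natDegree = 2 := by compute_degree!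
  rw [hq.natDegree_pow, hq2]
  omega

section Quartic

variable {a₀ a₂ a₃ a₄ : ℝ}

lemma quartic_natDegree (ha₀ : a₀ ≠ 0) :
    (C a₀ * X ^ 4 + C a₂ * X ^ 2 + C a₃ * X + C a₄ : ℝ[X]).natDegree = 4 := by
  compute_degree!

lemma quartic_leadingCoeff (ha₀ : a₀ ≠ 0) :
    (C a₀ * X ^ 4 + C a₂ * X ^ 2 + C a₃ * X + C a₄ : ℝ[X]).leadingCoeff = a₀ := by
  rw [leadingCoeff, quartic_natDegree ha₀]
  simp

lemma C_mul_quadratic_sq (a b c : ℝ) :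
    (C a * (X ^ 2 - C b * X + C c) ^ 2 : ℝ[X]) =
      C a * X ^ 4 + C (-2 * a * b) * X ^ 3 + C (a * (b ^ 2 + 2 * c)) * X ^ 2 +
        C (-2 * a * b * c) * X + C (a * c ^ 2) := by
  simp only [map_mul, map_add, map_pow, map_neg, map_ofNat]
  ring

lemma quartic_eq_C_mul_sq_of_eq (ha₀ : a₀ ≠ 0) {b c : ℝ}
    (h : (C a₀ * X ^ 4 + C a₂ * X ^ 2 + C a₃ * X + C a₄ : ℝ[X]) =
      C a₀ * (X ^ 2 - C b * X + C c) ^ 2) :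
    (C a₀ * X ^ 4 + C a₂ * X ^ 2 + C a₃ * X + C a₄ : ℝ[X]) =
      C a₀ * (X ^ 2 + C (a₂ / (2 * a₀))) ^ 2 := by
  have hcoeff := h.trans (C_mul_quadratic_sq a₀ b c)
  have h3 := congrArg (coeff · 3) hcoeff
  have h2 := congrArg (coeff · 2) hcoeff
  simp only [coeff_add, coeff_C_mul, coeff_X_pow, coeff_X, coeff_C] at h3 h2
  norm_num at h3 h2
  have hb : b = 0 := h3.resolve_left ha₀
  have hc : a₂ / (2 * a₀) = c := by rw [h2, hb]; field_simp; ring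
  rw [h, hb, hc, C_0, zero_mul, sub_zero]

lemma quartic_eq_C_mul_sq_iff (ha₀ : a₀ ≠ 0) :
    (C a₀ * X ^ 4 + C a₂ * X ^ 2 + C a₃ * X + C a₄ : ℝ[X]) =
      C a₀ * (X ^ 2 + C (a₂ / (2 * a₀))) ^ 2 ↔ a₃ = 0 ∧ a₂ ^ 2 - 4 * a₀ * a₄ = 0 := by
  set c := a₂ / (2 * a₀) with hc
  have ha₂ : a₂ = 2 * a₀ * c := by rw [hc]; field_simp
  constructor
  · intro h
    have hexp := C_mul_quadratic_sq a₀ 0 c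
    rw [C_0, zero_mul, sub_zero] at hexp
    rw [hexp] at h
    have h1 := congrArg (coeff · 1) h
    have h0 := congrArg (coeff · 0) h
    simp only [coeff_add, coeff_C_mul, coeff_X_pow, coeff_X, coeff_C] at h1 h0
    norm_num at h1 h0
    refine ⟨h1, ?_⟩
    rw [h0, ha₂]
    ring
  · rintro ⟨rfl, hd⟩
    have ha₄ : a₄ = a₀ * c ^ 2 := by
      apply mul_left_cancel₀ (mul_ne_zero four_ne_zero ha₀)
      rw [ha₂] at hd
      linear_combination -hd
    rw [ha₄, ha₂]
    simp only [map_mul, map_pow, map_ofNat, C_0]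
    ring

lemma exists_two_le_rootMultiplicity_quartic_iff (ha₀ : a₀ ≠ 0)
    (hpos : ∀ t : ℝ, eval t (C a₀ * X ^ 4 + C a₂ * X ^ 2 + C a₃ * X + C a₄) ≠ 0) :
    (∃ w : ℂ, 2 ≤ (Polynomial.map (algebraMap ℝ ℂ)
        (C a₀ * X ^ 4 + C a₂ * X ^ 2 + C a₃ * X + C a₄)).rootMultiplicity w) ↔
      (C a₀ * X ^ 4 + C a₂ * X ^ 2 + C a₃ * X + C a₄ : ℝ[X]) =
        C a₀ * (X ^ 2 + C (a₂ / (2 * a₀))) ^ 2 := by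
  constructor
  · rintro ⟨w, hw⟩
    have h := eq_C_leadingCoeff_mul_quadratic_sq (quartic_natDegree ha₀).le hpos hw
    rw [quartic_leadingCoeff ha₀] at h
    exact quartic_eq_C_mul_sq_of_eq ha₀ h
  · intro h
    refine exists_two_le_rootMultiplicity_of_sq_dvd (q := X ^ 2 + C (a₂ / (2 * a₀)))
      (fun h0 => hpos 0 (by rw [h0, eval_zero])) (by rw [degree_X_pow_add_C two_pos]; norm_num)
      ⟨C a₀, by rw [h, mul_comm]⟩

end Quartic

theorem stmt_15 (a₀ a₂ a₃ a₄ : ℝ) (ha₀ : 0 < a₀)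
    (hpos : ∀ t : ℝ, 0 < eval t (C a₀ * X ^ 4 + C a₂ * X ^ 2 + C a₃ * X + C a₄)) :
    ((∃ w : ℂ, 2 ≤ (Polynomial.map (algebraMap ℝ ℂ)
          (C a₀ * X ^ 4 + C a₂ * X ^ 2 + C a₃ * X + C a₄)).rootMultiplicity w) ↔
        (a₃ = 0 ∧ a₂ ^ 2 - 4 * a₀ * a₄ = 0)) ∧
    ((∃ w : ℂ, 2 ≤ (Polynomial.map (algebraMap ℝ ℂ)
          (C a₀ * X ^ 4 + C a₂ * X ^ 2 + C a₃ * X + C a₄)).rootMultiplicity w) ↔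
        (C a₀ * X ^ 4 + C a₂ * X ^ 2 + C a₃ * X + C a₄ : Polynomial ℝ) =
          C a₀ * (X ^ 2 + C (a₂ / (2 * a₀))) ^ 2) := by
  have h := exists_two_le_rootMultiplicity_quartic_iff ha₀.ne' fun t => (hpos t).ne'
  exact ⟨h.trans (quartic_eq_C_mul_sq_iff ha₀.ne'), h⟩
end

section
/- Let k be a field, m, n ≥ 2. Define, for f of degree m with leading coefficient a₀ and roots α₁,…,α_m in an algebraic closure, and for g, h of degree ≤ n, Φ(f,g,h) = a₀^{(m−1)(n−1)} ∏_{1≤i<j≤m} (g(αᵢ)h(αⱼ) − g(αⱼ)h(αᵢ))/(αᵢ−αⱼ) when f is separable. Then Φ(f,g,h) is a symmetric polynomial expression in the roots, hence is given by a polynomial with integer coefficients in the coefficients of f, g, and h. -/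
/-!
Work over the universal coefficient ring `S = ℤ[b₀, …, bₙ, c₀, …, cₙ]` with the generic
polynomials `G`, `H` of degree `n`. In `S[x₀, …, x_{m-1}]` each factor
`(G(xᵢ)H(xⱼ) - G(xⱼ)H(xᵢ)) / (xᵢ - xⱼ)` is a polynomial (an explicit Bezoutian), symmetric in
`i, j`, and of degree `≤ n - 1` in `xᵢ`; so their product `P` over `i < j` is symmetric, and has
degree `≤ (m - 1)(n - 1)` in `x₀`, since only the `m - 1` factors with `i = 0` involve `x₀`.
By the fundamental theorem `P = W(e₁, …, e_m)`, and comparing lexicographic leading terms shows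
that every monomial of `W` has total degree at most the degree of `P` in `x₀`. Hence substituting
`eᵢ = (-1)ⁱ aᵢ / a₀` into `W` and multiplying by `a₀ ^ ((m - 1)(n - 1))` gives a polynomial `Φ`
in the `aᵢ, bⱼ, cⱼ`, and specialising `xᵢ ↦ αᵢ` gives the formula.
-/

open Polynomial Finset

namespace Polynomial

variable {A B : Type*} [CommRing A] [CommRing B]

def bezoutian (g h : A[X]) (x y : A) : A :=
  h.eval x * (g.evalSubFactor x y).1 - g.eval x * (h.evalSubFactor x y).1

theorem bezoutian_mul_sub (g h : A[X]) (x y : A) :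
    bezoutian g h x y * (x - y) = g.eval x * h.eval y - g.eval y * h.eval x := by
  have hg := (g.evalSubFactor x y).2
  have hh := (h.evalSubFactor x y).2
  rw [bezoutian, sub_mul, mul_assoc, mul_assoc, ← hg, ← hh]
  ring

theorem bezoutian_comm [IsDomain A] (g h : A[X]) (x y : A) :
    bezoutian g h x y = bezoutian g h y x := by
  rcases eq_or_ne x y with rfl | hxy
  · rfl
  refine mul_right_cancel₀ (sub_ne_zero.2 hxy) ?_
  rw [bezoutian_mul_sub, ← neg_sub y x, mul_neg, bezoutian_mul_sub]
  ring

theorem map_bezoutian [IsDomain B] (φ : A →+* B) (g h : A[X]) {x y : A}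
    (hxy : φ x ≠ φ y) :
    φ (bezoutian g h x y) = bezoutian (g.map φ) (h.map φ) (φ x) (φ y) := by
  refine mul_right_cancel₀ (sub_ne_zero.2 hxy) ?_
  rw [bezoutian_mul_sub, ← map_sub, ← map_mul, bezoutian_mul_sub]
  simp [eval_map]

theorem bezoutian_eq_div {K : Type*} [Field K] (g h : K[X]) {x y : K} (hxy : x ≠ y) :
    bezoutian g h x y = (g.eval x * h.eval y - g.eval y * h.eval x) / (x - y) := by
  rw [eq_div_iff (sub_ne_zero.2 hxy), bezoutian_mul_sub]

noncomputable def ofRevCoeffs (n : ℕ) (c : Fin (n + 1) → A) : A[X] :=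
  ∑ j : Fin (n + 1), monomial (n - j) (c j)

theorem natDegree_ofRevCoeffs_le (n : ℕ) (c : Fin (n + 1) → A) :
    (ofRevCoeffs n c).natDegree ≤ n :=
  natDegree_sum_le_of_forall_le _ _ fun _ _ => (natDegree_monomial_le _).trans (Nat.sub_le _ _)

theorem map_ofRevCoeffs_eq {n : ℕ} {c : Fin (n + 1) → A} {φ : A →+* B} {p : B[X]}
    (hp : p.degree ≤ n) (hc : ∀ j, φ (c j) = p.coeff (n - j)) : (ofRevCoeffs n c).map φ = p := by
  conv_rhs => rw [p.as_sum_range' (n + 1) (Nat.lt_succ_of_le (natDegree_le_iff_degree_le.2 hp))]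
  rw [← sum_range_reflect, ← Fin.sum_univ_eq_sum_range
    (fun j => monomial (n + 1 - 1 - j) (p.coeff (n + 1 - 1 - j)))]
  simp [ofRevCoeffs, Polynomial.map_sum, hc]

theorem coeff_C_mul_prod_X_sub_C {m : ℕ} (a : A) (α : Fin m → A) {j : ℕ} (hj : j ≤ m) :
    (C a * ∏ i, (X - C (α i))).coeff (m - j) = (-1) ^ j * (a * (univ.val.map α).esymm j) := by
  have hprod : ∏ i, (X - C (α i)) = ((univ.val.map α).map fun t => X - C t).prod := by
    rw [Multiset.map_map]; rfl
  rw [coeff_C_mul, hprod, Multiset.prod_X_sub_C_coeff _ (by simp), Multiset.card_map, card_val,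
    card_univ, Fintype.card_fin, Nat.sub_sub_self hj]
  ring

end Polynomial

theorem Finset.prod_filter_lt_comp_perm {ι M : Type*} [LinearOrder ι] [Fintype ι]
    [CommMonoid M] (F : ι → ι → M) (hF : ∀ a b, F a b = F b a) (e : Equiv.Perm ι) :
    ∏ p ∈ univ.filter (fun p : ι × ι => p.1 < p.2), F (e p.1) (e p.2) =
      ∏ p ∈ univ.filter (fun p : ι × ι => p.1 < p.2), F p.1 p.2 := by
  have hsort (e : Equiv.Perm ι) {p : ι × ι} (hp : p.1 < p.2) :
      min (e p.1) (e p.2) < max (e p.1) (e p.2) :=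
    min_lt_max.2 (e.injective.ne hp.ne)
  refine prod_nbij' (fun p => (min (e p.1) (e p.2), max (e p.1) (e p.2)))
    (fun p => (min (e.symm p.1) (e.symm p.2), max (e.symm p.1) (e.symm p.2)))
    (fun p hp => by simpa using hsort e (by simpa using hp))
    (fun p hp => by simpa using hsort e.symm (by simpa using hp)) ?_ ?_ ?_
  · intro p hp
    rw [mem_filter] at hp
    rcases le_total (e p.1) (e p.2) with h | h <;> simp [h, hp.2.le]
  · intro p hp
    rw [mem_filter] at hp
    rcases le_total (e.symm p.1) (e.symm p.2) with h | h <;> simp [h, hp.2.le]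
  · intro p hp
    rcases le_total (e p.1) (e p.2) with h | h <;> simp [h, hF (e p.1)]

namespace MvPolynomial

section DegreeOf

variable {R σ : Type*} [CommRing R] {i : σ}

theorem degreeOf_eval_map_C_le (p : R[X]) (x : MvPolynomial σ R) :
    degreeOf i ((p.map C).eval x) ≤ p.natDegree * degreeOf i x := by
  rw [Polynomial.eval_map, Polynomial.eval₂_eq_sum_range]
  refine (degreeOf_sum_le _ _ _).trans (Finset.sup_le fun k hk => ?_)
  refine (degreeOf_mul_le _ _ _).trans ?_
  rw [degreeOf_C, zero_add]
  exact (degreeOf_pow_le _ _ _).trans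
    (Nat.mul_le_mul_right _ (Nat.lt_succ_iff.1 (mem_range.1 hk)))

theorem degreeOf_sub_of_degreeOf_eq_zero {x y : MvPolynomial σ R} (hy : degreeOf i y = 0) :
    degreeOf i (x - y) = degreeOf i x := by
  rcases Nat.eq_zero_or_pos (degreeOf i x) with hx | hx
  · rw [hx]
    exact Nat.le_zero.1 ((degreeOf_sub_le _ _ _).trans (by simp [hx, hy]))
  · rw [sub_eq_add_neg, degreeOf_add_eq_of_degreeOf_lt (by rwa [degreeOf_neg, hy])]

theorem degreeOf_le_sub_of_mul_eq [IsDomain R] {q d r : MvPolynomial σ R} (hd : d ≠ 0)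
    (h : q * d = r) : degreeOf i q ≤ degreeOf i r - degreeOf i d := by
  rcases eq_or_ne q 0 with rfl | hq
  · simp [degreeOf_zero]
  rw [← h, degreeOf_mul_eq hq hd]
  omega

theorem degreeOf_bezoutian_le [IsDomain R] {n : ℕ} {g h : R[X]} (hg : g.natDegree ≤ n)
    (hh : h.natDegree ≤ n) {x y : MvPolynomial σ R} (hy : degreeOf i y = 0) (hxy : x ≠ y) :
    degreeOf i (bezoutian (g.map C) (h.map C) x y) ≤ (n - 1) * degreeOf i x := by
  have hbound {p : R[X]} (hp : p.natDegree ≤ n) (z : MvPolynomial σ R) :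
      degreeOf i ((p.map C).eval z) ≤ n * degreeOf i z :=
    (degreeOf_eval_map_C_le p z).trans (Nat.mul_le_mul_right _ hp)
  have hr : degreeOf i ((g.map C).eval x * (h.map C).eval y - (g.map C).eval y * (h.map C).eval x)
      ≤ n * degreeOf i x := by
    have hgx := hbound hg x
    have hhy := hbound hh y
    have hgy := hbound hg y
    have hhx := hbound hh x
    rw [hy, mul_zero] at hhy hgy
    refine (degreeOf_sub_le _ _ _).trans (max_le ?_ ?_) <;>
      refine (degreeOf_mul_le _ _ _).trans ?_ <;> omega
  calc _ ≤ _ - degreeOf i (x - y) :=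
        degreeOf_le_sub_of_mul_eq (sub_ne_zero.2 hxy) (bezoutian_mul_sub _ _ x y)
    _ ≤ n * degreeOf i x - degreeOf i x := by
        rw [degreeOf_sub_of_degreeOf_eq_zero hy]; exact Nat.sub_le_sub_right hr _
    _ = (n - 1) * degreeOf i x := (Nat.sub_one_mul _ _).symm

end DegreeOf

section BezoutianProd

variable {R : Type*} [CommRing R] {m : ℕ}

noncomputable def bezoutianProd (m : ℕ) (g h : R[X]) : MvPolynomial (Fin m) R :=
  ∏ p ∈ univ.filter (fun p : Fin m × Fin m => p.1 < p.2),
    bezoutian (g.map C) (h.map C) (X p.1) (X p.2)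

theorem bezoutianProd_isSymmetric [IsDomain R] (g h : R[X]) :
    (bezoutianProd m g h).IsSymmetric := by
  intro e
  have hC : (rename e).toRingHom.comp (C : R →+* MvPolynomial (Fin m) R) = C :=
    RingHom.ext fun r => rename_C e r
  have hfactor (i j : Fin m) (hij : i < j) :
      rename e (bezoutian (g.map C) (h.map C) (X i) (X j)) =
        bezoutian (g.map C) (h.map C) (X (e i)) (X (e j)) := by
    have hne : (rename e).toRingHom (X i : MvPolynomial (Fin m) R) ≠
        (rename e).toRingHom (X j) := by
      simpa using e.injective.ne hij.ne
    calc rename e (bezoutian (g.map C) (h.map C) (X i) (X j))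
        = (rename e).toRingHom (bezoutian (g.map C) (h.map C) (X i) (X j)) := rfl
      _ = _ := by
        rw [map_bezoutian _ _ _ hne, Polynomial.map_map, Polynomial.map_map, hC]
        simp
  rw [bezoutianProd, map_prod, prod_congr rfl fun p hp => hfactor p.1 p.2 (mem_filter.1 hp).2]
  exact prod_filter_lt_comp_perm (M := MvPolynomial (Fin m) R)
    (fun i j => bezoutian (g.map C) (h.map C) (X i) (X j)) (fun _ _ => bezoutian_comm _ _ _ _) e

theorem sum_filter_lt_degreeOf_X_fst [Nontrivial R] [NeZero m] :
    ∑ p ∈ univ.filter (fun p : Fin m × Fin m => p.1 < p.2),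
      degreeOf 0 (X p.1 : MvPolynomial (Fin m) R) = m - 1 := by
  rw [sum_filter, Fintype.sum_prod_type,
    Fintype.sum_eq_single 0 fun i hi => by simp [degreeOf_X_of_ne (Ne.symm hi)]]
  simp [sum_boole, filter_lt_eq_Ioi, Fin.card_Ioi]

theorem degreeOf_bezoutianProd_le [IsDomain R] [NeZero m] {n : ℕ} {g h : R[X]}
    (hg : g.natDegree ≤ n) (hh : h.natDegree ≤ n) :
    degreeOf 0 (bezoutianProd m g h) ≤ (m - 1) * (n - 1) := by
  refine (degreeOf_prod_le _ _ _).trans ?_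
  calc _ ≤ ∑ p ∈ univ.filter (fun p : Fin m × Fin m => p.1 < p.2),
        (n - 1) * degreeOf 0 (X p.1 : MvPolynomial (Fin m) R) := by
        refine sum_le_sum fun p hp => ?_
        have hlt := (mem_filter.1 hp).2
        exact degreeOf_bezoutian_le hg hh (degreeOf_X_of_ne ((Fin.zero_le p.1).trans_lt hlt).ne)
          (X_injective.ne hlt.ne)
    _ = (m - 1) * (n - 1) := by rw [← mul_sum, sum_filter_lt_degreeOf_X_fst, mul_comm]

theorem eval₂Hom_bezoutianProd {K : Type*} [Field K] (φ : R →+* K) (g h : R[X])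
    {α : Fin m → K} (hα : Function.Injective α) :
    eval₂Hom φ α (bezoutianProd m g h) =
      ∏ p ∈ univ.filter (fun p : Fin m × Fin m => p.1 < p.2),
        ((g.map φ).eval (α p.1) * (h.map φ).eval (α p.2) -
          (g.map φ).eval (α p.2) * (h.map φ).eval (α p.1)) / (α p.1 - α p.2) := by
  rw [bezoutianProd, map_prod]
  refine prod_congr rfl fun p hp => ?_
  have hne : α p.1 ≠ α p.2 := hα.ne (mem_filter.1 hp).2.ne
  rw [map_bezoutian _ _ _ (by simpa using hne), Polynomial.map_map, Polynomial.map_map,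
    eval₂Hom_comp_C, eval₂Hom_X', eval₂Hom_X', bezoutian_eq_div _ _ hne]

end BezoutianProd

section Esymm

open AddMonoidAlgebra Fin

variable {R : Type*} [CommRing R] {m : ℕ}

theorem ofLex_apply_zero_le_of_le [NeZero m] {a b : Lex (Fin m →₀ ℕ)} (h : a ≤ b) :
    ofLex a 0 ≤ ofLex b 0 := by
  rcases (le_iff_eq_or_lt.1 h).imp id Finsupp.Lex.lt_iff.1 with rfl | ⟨i, hlt, hi⟩
  · exact le_rfl
  rcases eq_or_ne i 0 with rfl | hne
  · exact hi.le
  · exact (hlt 0 ((Fin.pos_iff_ne_zero' i).2 hne)).le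

theorem ofLex_supDegree_apply_le_degreeOf {σ : Type*} [LinearOrder σ] (p : MvPolynomial σ R)
    (i : σ) : ofLex (p.supDegree toLex) i ≤ p.degreeOf i := by
  rcases eq_or_ne p 0 with rfl | hp
  · simp [supDegree_zero, bot_eq_zero (α := Lex (σ →₀ ℕ))]
  obtain ⟨a, ha, he⟩ := exists_supDegree_mem_support toLex hp
  rw [he, ofLex_toLex]
  exact monomial_le_degreeOf i ha

theorem sum_le_degreeOf_aeval_esymm [NeZero m] (W : MvPolynomial (Fin m) R)
    {t : Fin m →₀ ℕ} (ht : t ∈ W.support) :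
    ∑ i, t i ≤ degreeOf 0 (aeval (fun i : Fin m => esymm (Fin m) R (i + 1)) W) := by
  -- The monomials of `W` are sent to polynomials with pairwise distinct lex-leading exponents
  -- `accumulate m m s`, whose first entry is `∑ i, s i`; the largest one survives in the sum.
  set F : (Fin m →₀ ℕ) → MvPolynomial (Fin m) R :=
    fun s => esymmAlgHomMonomial (Fin m) s (W.coeff s)
  have hF : ∀ s ∈ W.support, ofLex ((F s).supDegree toLex) = accumulate m m s := fun s hs =>
    supDegree_esymmAlgHomMonomial (mem_support_iff.1 hs) s le_rfl
  obtain ⟨s, hs, hmax⟩ := W.support.exists_max_image (fun s => (F s).supDegree toLex) ⟨t, ht⟩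
  have hlt : ∀ u ∈ W.support, u ≠ s → (F u).supDegree toLex < (F s).supDegree toLex :=
    fun u hu hne => (hmax u hu).lt_of_ne fun he => hne <| DFunLike.coe_injective <|
      accumulate_injective le_rfl (by rw [← hF u hu, ← hF s hs, he])
  have hsum : aeval (fun i : Fin m => esymm (Fin m) R (i + 1)) W = ∑ u ∈ W.support, F u := by
    conv_lhs => rw [W.as_sum]
    simp only [map_sum, F, esymmAlgHomMonomial, esymmAlgHom_apply]
  calc ∑ i, t i = ofLex ((F t).supDegree toLex) 0 := by simp [hF t ht, accumulate_apply]
    _ ≤ ofLex ((F s).supDegree toLex) 0 := ofLex_apply_zero_le_of_le (hmax t ht)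
    _ = ofLex ((∑ u ∈ W.support, F u).supDegree toLex) 0 := by
        rw [(supDegree_leadingCoeff_sum_eq hs hlt).1]
    _ ≤ _ := hsum ▸ ofLex_supDegree_apply_le_degreeOf _ 0

theorem eval₂Hom_aeval_esymm {S : Type*} [CommRing S] (φ : R →+* S) (α : Fin m → S)
    (W : MvPolynomial (Fin m) R) :
    eval₂Hom φ α (aeval (fun i : Fin m => esymm (Fin m) R (i + 1)) W) =
      eval₂ φ (fun i : Fin m => (univ.val.map α).esymm ((i : ℕ) + 1)) W := by
  rw [aeval_def, eval₂_comp_left, algebraMap_eq, eval₂Hom_comp_C]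
  congr 1
  ext i
  simp_rw [Function.comp_apply, esymm, map_sum, map_prod, eval₂Hom_X', esymm_map_val]

variable {τ : Type*}

/-- `W(e₁, …, e_m)` rewritten through `eᵢ = (-1)ⁱ aᵢ / a₀` with the denominators cleared by
`a₀ ^ D`, where `Sum.inl i` is the variable `aᵢ`. -/
noncomputable def homogenizeEsymm (D : ℕ) (W : MvPolynomial (Fin m) (MvPolynomial τ R)) :
    MvPolynomial (Fin (m + 1) ⊕ τ) R :=
  ∑ t ∈ W.support, rename Sum.inr (W.coeff t) * X (Sum.inl 0) ^ (D - ∑ i, t i) *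
    ∏ i : Fin m, ((-1) ^ ((i : ℕ) + 1) * X (Sum.inl i.succ)) ^ t i

theorem aeval_homogenizeEsymm {k : Type*} [CommRing k] [Algebra R k] {D : ℕ}
    {W : MvPolynomial (Fin m) (MvPolynomial τ R)} (hW : ∀ t ∈ W.support, ∑ i, t i ≤ D)
    {a₀ : k} {E : ℕ → k} (hE : E 0 = 1) {c : Fin (m + 1) → k}
    (hc : ∀ j : Fin (m + 1), c j = (-1) ^ (j : ℕ) * (a₀ * E j)) (v : τ → k) :
    aeval (Sum.elim c v) (homogenizeEsymm D W) =
      a₀ ^ D * eval₂ (aeval v).toRingHom (fun i : Fin m => E ((i : ℕ) + 1)) W := by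
  have hfactor (i : Fin m) :
      aeval (Sum.elim c v) ((-1) ^ ((i : ℕ) + 1) * X (Sum.inl i.succ) :
        MvPolynomial (Fin (m + 1) ⊕ τ) R) = a₀ * E ((i : ℕ) + 1) := by
    rw [map_mul, map_pow, map_neg, map_one, aeval_X, Sum.elim_inl, hc, Fin.val_succ,
      ← mul_assoc, ← mul_pow]
    norm_num
  rw [homogenizeEsymm, map_sum, eval₂_eq', mul_sum]
  refine sum_congr rfl fun t ht => ?_
  rw [map_mul, map_mul, map_pow, map_prod, aeval_rename, aeval_X, Sum.elim_inl,
    Sum.elim_comp_inr, hc, Fin.val_zero, pow_zero, one_mul, hE, mul_one]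
  simp only [map_pow, hfactor]
  simp only [mul_pow, prod_mul_distrib, prod_pow_eq_pow_sum]
  rw [← pow_sub_mul_pow a₀ (hW t ht)]
  simp only [AlgHom.toRingHom_eq_coe, RingHom.coe_coe]
  ring

end Esymm

end MvPolynomial

theorem stmt_18_general (m n : ℕ) (hm : 2 ≤ m) :
    ∃ Φ : MvPolynomial (Fin (m + 1) ⊕ (Fin (n + 1) ⊕ Fin (n + 1))) ℤ,
      ∀ (k : Type) (_ : Field k), ∀ (f g h : Polynomial k) (a₀ : k) (α : Fin m → k),
        a₀ ≠ 0 → Function.Injective α → f = C a₀ * ∏ i, (X - C (α i)) →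
        g.degree ≤ (n : WithBot ℕ) → h.degree ≤ (n : WithBot ℕ) →
        MvPolynomial.aeval
            (Sum.elim (fun i : Fin (m + 1) => f.coeff (m - (i : ℕ)))
              (Sum.elim (fun j : Fin (n + 1) => g.coeff (n - (j : ℕ)))
                (fun j : Fin (n + 1) => h.coeff (n - (j : ℕ))))) Φ =
          a₀ ^ ((m - 1) * (n - 1)) *
            ∏ p ∈ Finset.univ.filter (fun p : Fin m × Fin m => p.1 < p.2),
              (g.eval (α p.1) * h.eval (α p.2) - g.eval (α p.2) * h.eval (α p.1)) /
                (α p.1 - α p.2) := by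
  have : NeZero m := ⟨by omega⟩
  set G := ofRevCoeffs n
    (MvPolynomial.X ∘ Sum.inl : _ → MvPolynomial (Fin (n + 1) ⊕ Fin (n + 1)) ℤ)
  set H := ofRevCoeffs n
    (MvPolynomial.X ∘ Sum.inr : _ → MvPolynomial (Fin (n + 1) ⊕ Fin (n + 1)) ℤ)
  obtain ⟨W, hW⟩ := MvPolynomial.esymmAlgHom_fin_surjective _ le_rfl
    ⟨_, MvPolynomial.bezoutianProd_isSymmetric (m := m) G H⟩
  have hPW := congrArg Subtype.val hW
  rw [MvPolynomial.esymmAlgHom_apply] at hPW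
  have hweight (t) (ht : t ∈ W.support) : ∑ i, t i ≤ (m - 1) * (n - 1) :=
    (MvPolynomial.sum_le_degreeOf_aeval_esymm W ht).trans <| hPW ▸
      MvPolynomial.degreeOf_bezoutianProd_le (natDegree_ofRevCoeffs_le n _)
        (natDegree_ofRevCoeffs_le n _)
  refine ⟨MvPolynomial.homogenizeEsymm ((m - 1) * (n - 1)) W,
    fun k _ f g h a₀ α _ hα hf hg hh => ?_⟩
  rw [MvPolynomial.aeval_homogenizeEsymm hweight (E := (Finset.univ.val.map α).esymm)
    (by simp [Multiset.esymm, Multiset.powersetCard_zero_left])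
    (fun j => by rw [hf]; exact coeff_C_mul_prod_X_sub_C a₀ α j.is_le),
    ← MvPolynomial.eval₂Hom_aeval_esymm, hPW, MvPolynomial.eval₂Hom_bezoutianProd _ _ _ hα,
    map_ofRevCoeffs_eq hg fun j => by simp, map_ofRevCoeffs_eq hh fun j => by simp]

/-- The Φ-invariant `Φ_{m,n}(f,g,h) = a₀^{(m-1)(n-1)} ∏_{i<j} (g(αᵢ)h(αⱼ) - g(αⱼ)h(αᵢ))/(αᵢ-αⱼ)`
(for separable `f` of degree `m` with roots `αᵢ` and leading coefficient `a₀`, and `g`, `h` of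
degree `≤ n`) is given by a single polynomial with integer coefficients in the coefficients
`aᵢ = coeff of x^{m-i}` of `f`, `bⱼ = coeff of x^{n-j}` of `g` and `cⱼ = coeff of x^{n-j}` of `h`,
uniformly in the field. -/
theorem stmt_18 (m n : ℕ) (hm : 2 ≤ m) (hn : 2 ≤ n) :
    ∃ Φ : MvPolynomial (Fin (m + 1) ⊕ (Fin (n + 1) ⊕ Fin (n + 1))) ℤ,
      ∀ (k : Type) (_ : Field k), ∀ (f g h : Polynomial k) (a₀ : k) (α : Fin m → k),
        a₀ ≠ 0 → Function.Injective α → f = C a₀ * ∏ i, (X - C (α i)) →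
        g.degree ≤ (n : WithBot ℕ) → h.degree ≤ (n : WithBot ℕ) →
        MvPolynomial.aeval
            (Sum.elim (fun i : Fin (m + 1) => f.coeff (m - (i : ℕ)))
              (Sum.elim (fun j : Fin (n + 1) => g.coeff (n - (j : ℕ)))
                (fun j : Fin (n + 1) => h.coeff (n - (j : ℕ))))) Φ =
          a₀ ^ ((m - 1) * (n - 1)) *
            ∏ p ∈ Finset.univ.filter (fun p : Fin m × Fin m => p.1 < p.2),
              (g.eval (α p.1) * h.eval (α p.2) - g.eval (α p.2) * h.eval (α p.1)) /
                (α p.1 - α p.2) :=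
  stmt_18_general m n hm
end
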